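/- arXiv:1604.01472 — 5 statements merged into one kernel-verified Lean document; each statement's English description precedes it below -/
import Mathlib

section
/- Let μ be a finite Borel measure on ℝ that is equivalent to Lebesgue measure on an interval containing the support of a probability measure m. Then the map ν ↦ (x ↦ ν(−∞, x]) is continuous from the set {ν ∈ M₁(ℝ) : supp(ν) ⊆ supp(m)} (with the weak* topology) into L²(μ). -/
/-! By the portmanteau theorem, weak convergence `νₙ → ν` gives `cdf νₙ x → cdf ν x` at every `x`
that is not an atom of `ν`. There are only countably many atoms and `μ` has no atoms of its own
(it is absolutely continuous with respect to Lebesgue measure), so the convergence holds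
`μ`-almost everywhere; since the cdfs are bounded by `1` and `μ` is finite, it upgrades to
convergence in `L²(μ)`. The space of probability measures is metrizable, so sequential
continuity suffices. -/

open MeasureTheory Filter Topology ENNReal ProbabilityTheory

def measureSupport (ν : Measure ℝ) : Set ℝ :=
  {x | ∀ U : Set ℝ, IsOpen U → x ∈ U → ν U ≠ 0}

namespace MeasureTheory

variable {α β : Type*} [MeasurableSpace α] {μ : Measure α} [NormedAddCommGroup β] {p : ℝ≥0∞}

theorem Measure.countable_setOf_measure_singleton_ne_zero [MeasurableSingletonClass α]
    (ν : Measure α) [SFinite ν] : {x | ν {x} ≠ 0}.Countable := by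
  simpa [Set.ofPred_eq_eq_singleton, pos_iff_ne_zero] using
    Measure.countable_meas_level_set_pos (μ := ν) measurable_id

theorem Measure.AbsolutelyContinuous.ae_measure_singleton_eq_zero [MeasurableSingletonClass α]
    {ρ : Measure α} [NullSingletonClass ρ] (hμ : μ ≪ ρ) (ν : Measure α) [SFinite ν] :
    ∀ᵐ x ∂μ, ν {x} = 0 := by
  rw [ae_iff]
  exact hμ ((Measure.countable_setOf_measure_singleton_ne_zero ν).measure_zero ρ)

theorem unifIntegrable_of_norm_le {ι : Type*} (hp : 1 ≤ p) (hp' : p ≠ ∞) {f : ι → α → β}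
    (hf : ∀ i, AEStronglyMeasurable (f i) μ) {C : ℝ} (hC : ∀ i x, ‖f i x‖ ≤ C) :
    UnifIntegrable f p μ := by
  refine unifIntegrable_of hp hp' hf fun ε _ ↦ ⟨C.toNNReal + 1, fun i ↦ ?_⟩
  have hempty : {x | C.toNNReal + 1 ≤ ‖f i x‖₊} = ∅ := by
    ext x
    simp only [Set.mem_ofPred_eq, Set.mem_empty_iff_false, iff_false, not_le, ← NNReal.coe_lt_coe,
      coe_nnnorm, NNReal.coe_add, NNReal.coe_one]
    linarith [hC i x, C.le_coe_toNNReal]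
  simp [hempty]

theorem tendsto_eLpNorm_sub_of_tendsto_ae_of_norm_le [IsFiniteMeasure μ] (hp : 1 ≤ p)
    (hp' : p ≠ ∞) {f : ℕ → α → β} {g : α → β} (hf : ∀ n, AEStronglyMeasurable (f n) μ)
    {C : ℝ} (hC : ∀ n x, ‖f n x‖ ≤ C)
    (hfg : ∀ᵐ x ∂μ, Tendsto (fun n ↦ f n x) atTop (𝓝 (g x))) :
    Tendsto (fun n ↦ eLpNorm (f n - g) p μ) atTop (𝓝 0) := by
  have hgC : ∀ᵐ x ∂μ, ‖g x‖ ≤ C := by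
    filter_upwards [hfg] with x hx
    exact le_of_tendsto' hx.norm fun n ↦ hC n x
  have hg : MemLp g p μ := .of_bound (aestronglyMeasurable_of_tendsto_ae atTop hf hfg) C hgC
  exact tendsto_Lp_finite_of_tendsto_ae hp hp' hf hg (unifIntegrable_of_norm_le hp hp' hf hC) hfg

end MeasureTheory

namespace ProbabilityTheory

variable {ι : Type*} {L : Filter ι} {ν : ι → ProbabilityMeasure ℝ} {ν₀ : ProbabilityMeasure ℝ}

theorem tendsto_cdf_of_tendsto_of_measure_singleton (h : Tendsto ν L (𝓝 ν₀)) {x : ℝ}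
    (hx : (ν₀ : Measure ℝ) {x} = 0) :
    Tendsto (fun i ↦ cdf (ν i : Measure ℝ) x) L (𝓝 (cdf (ν₀ : Measure ℝ) x)) := by
  simp only [cdf_eq_real, measureReal_def]
  refine (ENNReal.tendsto_toReal (measure_ne_top _ _)).comp ?_
  exact ProbabilityMeasure.tendsto_measure_of_null_frontier_of_tendsto' h (by rwa [frontier_Iic])

theorem ae_tendsto_cdf_of_tendsto {μ : Measure ℝ} (hμ : μ ≪ volume) (h : Tendsto ν L (𝓝 ν₀)) :
    ∀ᵐ x ∂μ, Tendsto (fun i ↦ cdf (ν i : Measure ℝ) x) L (𝓝 (cdf (ν₀ : Measure ℝ) x)) := by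
  filter_upwards [Measure.AbsolutelyContinuous.ae_measure_singleton_eq_zero hμ (ν₀ : Measure ℝ)] with x hx
  exact tendsto_cdf_of_tendsto_of_measure_singleton h hx

theorem continuous_of_ae_eq_cdf {μ : Measure ℝ} [IsFiniteMeasure μ] (hμ : μ ≪ volume)
    {p : ℝ≥0∞} [Fact (1 ≤ p)] (hp : p ≠ ∞) (T : ProbabilityMeasure ℝ → Lp ℝ p μ)
    (hT : ∀ ν : ProbabilityMeasure ℝ, (T ν : ℝ → ℝ) =ᵐ[μ] cdf (ν : Measure ℝ)) :
    Continuous T := by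
  refine continuous_iff_seqContinuous.mpr fun ν ν₀ hν ↦ ?_
  rw [Lp.tendsto_Lp_iff_tendsto_eLpNorm']
  have hcdf : Tendsto (fun n ↦ eLpNorm (⇑(cdf (ν n : Measure ℝ)) - ⇑(cdf (ν₀ : Measure ℝ))) p μ)
      atTop (𝓝 0) := by
    refine tendsto_eLpNorm_sub_of_tendsto_ae_of_norm_le Fact.out hp
      (fun n ↦ (monotone_cdf _).measurable.aestronglyMeasurable) (C := 1) (fun n x ↦ ?_)
      (ae_tendsto_cdf_of_tendsto hμ hν)
    rw [Real.norm_of_nonneg (cdf_nonneg _ x)]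
    exact cdf_le_one _ x
  refine hcdf.congr fun n ↦ eLpNorm_congr_ae ?_
  exact ((hT (ν n)).sub (hT ν₀)).symm

end ProbabilityTheory

theorem stmt4_general
    (μ : Measure ℝ) [IsFiniteMeasure μ]
    (m : ProbabilityMeasure ℝ)
    (I : Set ℝ)
    (hac : μ ≪ volume.restrict I)
    (T : ProbabilityMeasure ℝ → Lp ℝ 2 μ)
    (hT : ∀ ν : ProbabilityMeasure ℝ,
      (T ν : ℝ → ℝ) =ᵐ[μ] fun x => ((ν : Measure ℝ) (Set.Iic x)).toReal) :
    ContinuousOn T {ν : ProbabilityMeasure ℝ |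
      measureSupport (ν : Measure ℝ) ⊆ measureSupport (m : Measure ℝ)} := by
  have hμ : μ ≪ volume := hac.trans Measure.restrict_le_self.absolutelyContinuous
  refine (continuous_of_ae_eq_cdf hμ ENNReal.ofNat_ne_top T fun ν ↦ ?_).continuousOn
  exact (hT ν).trans (.of_forall fun x ↦ (cdf_eq_real _ x).symm)

/-- Let `μ` be a finite Borel measure on `ℝ` equivalent to Lebesgue measure on an interval `I`
containing the support of a probability measure `m`. Then the map `ν ↦ (x ↦ ν(−∞, x])` is
continuous from `{ν ∈ M₁(ℝ) : supp ν ⊆ supp m}` (weak* topology) into `L²(μ)`. -/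
theorem stmt4
    (μ : Measure ℝ) [IsFiniteMeasure μ]
    (m : ProbabilityMeasure ℝ)
    (I : Set ℝ) (hI : I.OrdConnected)
    (hsupp : measureSupport (m : Measure ℝ) ⊆ I)
    (hac : μ ≪ volume.restrict I) (hac' : volume.restrict I ≪ μ)
    (T : ProbabilityMeasure ℝ → Lp ℝ 2 μ)
    (hT : ∀ ν : ProbabilityMeasure ℝ,
      (T ν : ℝ → ℝ) =ᵐ[μ] fun x => ((ν : Measure ℝ) (Set.Iic x)).toReal) :
    ContinuousOn T {ν : ProbabilityMeasure ℝ |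
      measureSupport (ν : Measure ℝ) ⊆ measureSupport (m : Measure ℝ)} :=
  stmt4_general μ m I hac T hT
end

section
/- Let ξ be a random element of M₁(ℝ) with baricenter 𝔼ξ, and μ a finite Borel measure absolutely continuous with respect to Lebesgue measure on an interval containing supp(𝔼ξ). Define F(x) := ξ(−∞, x]. Then F is a bounded, strongly measurable random element in L²(μ), and its Bochner expectation is the map x ↦ (𝔼ξ)(−∞, x]. -/
/-!
The distribution function `x ↦ ν (Iic x)`, as an element of `Lᵖ(μ)`, depends continuously on `ν`:
by the portmanteau theorem `ν' (Iic x) → ν (Iic x)` at every `x` that is not an atom of `ν`, the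
atoms of `ν` are countable and hence null for the atomless `μ`, and dominated convergence applies.
So `ω ↦ F ω` is a continuous function of a measurable map, hence strongly measurable, and it is
bounded since distribution functions take values in `[0, 1]`. To identify the expectation, pair
with `g ∈ L²(μ)`: by Fubini `⟪g, F_ν⟫ = ∫ h_g dν` where `h_g t = ∫_{[t, ∞)} g dμ` is bounded and
continuous, so the barycenter identity for `h_g` gives `𝔼 ⟪g, F⟫ = ⟪g, F_m⟫`.
-/

open MeasureTheory

open Filter Topology Set
open scoped ENNReal

theorem tendsto_eLpNorm_of_tendsto_ae_of_norm_le {α E ι : Type*} [MeasurableSpace α]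
    {μ : Measure α} [IsFiniteMeasure μ] [NormedAddCommGroup E] {p : ℝ≥0∞} (hp : p ≠ ∞)
    {l : Filter ι} [l.IsCountablyGenerated] {f : ι → α → E} {C : ℝ}
    (hf : ∀ i, AEStronglyMeasurable (f i) μ) (hC : ∀ i, ∀ᵐ x ∂μ, ‖f i x‖ ≤ C)
    (hlim : ∀ᵐ x ∂μ, Tendsto (fun i => f i x) l (𝓝 0)) :
    Tendsto (fun i => eLpNorm (f i) p μ) l (𝓝 0) := by
  rcases eq_or_ne p 0 with rfl | hp0
  · simpa using tendsto_const_nhds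
  have hp_pos : 0 < p.toReal := ENNReal.toReal_pos hp0 hp
  have hint : Tendsto (fun i => ∫⁻ x, ‖f i x‖ₑ ^ p.toReal ∂μ) l (𝓝 0) := by
    have := tendsto_lintegral_filter_of_dominated_convergence' (l := l) (f := 0)
      (fun _ => ENNReal.ofReal C ^ p.toReal)
      (Eventually.of_forall fun i => (hf i).enorm.pow_const _)
      (Eventually.of_forall fun i => (hC i).mono fun x hx =>
        ENNReal.rpow_le_rpow (ofReal_norm (f i x) ▸ ENNReal.ofReal_le_ofReal hx)
          hp_pos.le)
      (by simp [lintegral_const, ENNReal.mul_eq_top, hp_pos.le])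
      (hlim.mono fun x hx => ?_)
    · simpa using this
    · have := (((ENNReal.continuous_rpow_const (y := p.toReal)).comp continuous_enorm).tendsto
        (0 : E)).comp hx
      rwa [Function.comp_apply, enorm_zero, ENNReal.zero_rpow_of_pos hp_pos] at this
  simp_rw [eLpNorm_eq_lintegral_rpow_enorm_toReal hp0 hp]
  have := ((ENNReal.continuous_rpow_const (y := p.toReal⁻¹)).tendsto 0).comp hint
  rw [ENNReal.zero_rpow_of_pos (inv_pos.2 hp_pos)] at this
  rwa [one_div]

theorem MeasureTheory.Measure.countable_setOf_measure_singleton_ne_zero_s5 {α : Type*}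
    [MeasurableSpace α] [MeasurableSingletonClass α] (ν : Measure α) [SFinite ν] :
    {x | ν {x} ≠ 0}.Countable := by
  simpa only [pos_iff_ne_zero] using
    Measure.countable_meas_pos_of_disjoint_iUnion (μ := ν) measurableSet_singleton
      fun _ _ hxy => disjoint_singleton.2 hxy

theorem MeasureTheory.ProbabilityMeasure.continuousAt_measureReal_Iic
    {ν : ProbabilityMeasure ℝ} {x : ℝ} (hx : (ν : Measure ℝ) {x} = 0) :
    ContinuousAt (fun ν' : ProbabilityMeasure ℝ => (ν' : Measure ℝ).real (Iic x)) ν :=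
  (ENNReal.tendsto_toReal (measure_ne_top _ _)).comp <|
    ProbabilityMeasure.tendsto_measure_of_null_frontier_of_tendsto' tendsto_id
      (by rwa [frontier_Iic])

section CDFInLp

variable {μ : Measure ℝ} [IsFiniteMeasure μ] {p : ℝ≥0∞}
  {T : ProbabilityMeasure ℝ → Lp ℝ p μ}

theorem norm_le_of_coeFn_ae_eq_cdf
    (hT : ∀ ν : ProbabilityMeasure ℝ, T ν =ᵐ[μ] fun x => (ν : Measure ℝ).real (Iic x))
    (ν : ProbabilityMeasure ℝ) : ‖T ν‖ ≤ measureUnivNNReal μ ^ p.toReal⁻¹ := by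
  simpa using Lp.norm_le_of_ae_bound zero_le_one <| (hT ν).mono fun x hx => by
    rw [hx, Real.norm_of_nonneg measureReal_nonneg]
    exact measureReal_le_one

theorem continuous_of_coeFn_ae_eq_cdf [Fact (1 ≤ p)] [NullSingletonClass μ] (hp : p ≠ ∞)
    (hT : ∀ ν : ProbabilityMeasure ℝ, T ν =ᵐ[μ] fun x => (ν : Measure ℝ).real (Iic x)) :
    Continuous T := by
  refine continuous_iff_continuousAt.2 fun ν => ?_
  rw [ContinuousAt, Lp.tendsto_Lp_iff_tendsto_eLpNorm']
  have hcongr : ∀ ν', eLpNorm (⇑(T ν') - ⇑(T ν)) p μ =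
      eLpNorm (fun x => (ν' : Measure ℝ).real (Iic x) - (ν : Measure ℝ).real (Iic x)) p μ :=
    fun ν' => eLpNorm_congr_ae ((hT ν').sub (hT ν))
  have hmeas : ∀ ν : ProbabilityMeasure ℝ, Measurable fun x => (ν : Measure ℝ).real (Iic x) :=
    fun ν => Monotone.measurable fun a b hab => measureReal_mono (Iic_subset_Iic.2 hab)
  simp_rw [hcongr]
  refine tendsto_eLpNorm_of_tendsto_ae_of_norm_le hp (C := 1)
    (fun ν' => ((hmeas ν').sub (hmeas ν)).aestronglyMeasurable)
    (fun ν' => ae_of_all _ fun x => ?_) ?_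
  · exact abs_sub_le_of_nonneg_of_le measureReal_nonneg measureReal_le_one measureReal_nonneg
      measureReal_le_one
  · filter_upwards [((ν : Measure ℝ).countable_setOf_measure_singleton_ne_zero_s5).ae_notMem μ]
      with x hx
    simpa using (ProbabilityMeasure.continuousAt_measureReal_Iic (ν := ν) (x := x)
      (not_not.1 hx)).sub_const ((ν : Measure ℝ).real (Iic x))

end CDFInLp

section TailIntegral

variable {μ : Measure ℝ} {g : ℝ → ℝ}

theorem continuous_setIntegral_Ici [NullSingletonClass μ] (hg : Integrable g μ) :
    Continuous fun t => ∫ x in Ici t, g x ∂μ :=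
  continuous_iff_continuousAt.2 fun t =>
    (hg.integrableOn.continuousOn_Ici_primitive_Ici (a₀ := t - 1)).continuousAt
      (Ici_mem_nhds (sub_one_lt t))

theorem norm_setIntegral_Ici_le (hg : Integrable g μ) (t : ℝ) :
    ‖∫ x in Ici t, g x ∂μ‖ ≤ ∫ x, ‖g x‖ ∂μ :=
  (norm_integral_le_integral_norm _).trans <|
    setIntegral_le_integral hg.norm (ae_of_all _ fun _ => norm_nonneg _)

theorem integral_mul_measureReal_Iic [SFinite μ] (hg : Integrable g μ) (ν : Measure ℝ)
    [IsFiniteMeasure ν] :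
    ∫ x, g x * ν.real (Iic x) ∂μ = ∫ t, ∫ x in Ici t, g x ∂μ ∂ν := by
  set F : ℝ × ℝ → ℝ := {z | z.2 ≤ z.1}.indicator fun z => g z.1
  have hF : Integrable F (μ.prod ν) := by
    refine Integrable.mono' ((hg.norm.mul_prod (integrable_const (1 : ℝ))).congr ?_) ?_
      (ae_of_all _ fun z => norm_indicator_le_norm_self _ _)
    · simp
    · exact (hg.aestronglyMeasurable.comp_fst).indicator
        (measurableSet_le measurable_snd measurable_fst)
  calc ∫ x, g x * ν.real (Iic x) ∂μ = ∫ x, ∫ t, F (x, t) ∂ν ∂μ := by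
        congr 1 with x
        have hFx : (fun t => F (x, t)) = (Iic x).indicator fun _ => g x := by
          ext t; simp [F, indicator_apply]
        rw [hFx, integral_indicator_const _ measurableSet_Iic, smul_eq_mul, mul_comm]
    _ = ∫ t, ∫ x, F (x, t) ∂μ ∂ν := integral_integral_swap hF
    _ = ∫ t, ∫ x in Ici t, g x ∂μ ∂ν := by
        congr 1 with t
        rw [← integral_indicator measurableSet_Ici]
        rfl

end TailIntegral

theorem Continuous.stronglyMeasurable_comp_of_measurable_borel {X Ω E : Type*}
    [TopologicalSpace X] [MeasurableSpace Ω] [TopologicalSpace E]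
    [TopologicalSpace.PseudoMetrizableSpace E] [SecondCountableTopology E] {T : X → E}
    (hT : Continuous T) {ξ : Ω → X} (hξ : Measurable[_, borel X] ξ) :
    StronglyMeasurable (T ∘ ξ) := by
  borelize X E
  exact (hT.measurable.comp hξ).stronglyMeasurable

theorem inner_eq_integral_setIntegral_Ici_of_coeFn_ae_eq_cdf {μ : Measure ℝ}
    [IsFiniteMeasure μ] {ν : Measure ℝ} [IsFiniteMeasure ν] {f : Lp ℝ 2 μ}
    (hf : f =ᵐ[μ] fun x => ν.real (Iic x)) (g : Lp ℝ 2 μ) :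
    inner ℝ g f = ∫ t, ∫ x in Ici t, g x ∂μ ∂ν := by
  rw [L2.inner_def, ← integral_mul_measureReal_Iic ((Lp.memLp g).integrable one_le_two)]
  exact integral_congr_ae (hf.mono fun x hx => by simp [hx, mul_comm])

theorem stmt5_general
    {Ω : Type*} [MeasurableSpace Ω] (P : Measure Ω) [IsProbabilityMeasure P]
    (ξ : Ω → ProbabilityMeasure ℝ)
    (hξ : Measurable[_, borel (ProbabilityMeasure ℝ)] ξ)
    (m : ProbabilityMeasure ℝ)
    (hbar : ∀ f : BoundedContinuousFunction ℝ ℝ,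
      ∫ ω, (∫ x, f x ∂((ξ ω : Measure ℝ))) ∂P = ∫ x, f x ∂(m : Measure ℝ))
    (μ : Measure ℝ) [IsFiniteMeasure μ]
    (I : Set ℝ)
    (hac : μ ≪ volume.restrict I)
    (T : ProbabilityMeasure ℝ → Lp ℝ 2 μ)
    (hT : ∀ ν : ProbabilityMeasure ℝ,
      (T ν : ℝ → ℝ) =ᵐ[μ] fun x => ((ν : Measure ℝ) (Set.Iic x)).toReal) :
    (∃ C : ℝ, ∀ ω, ‖T (ξ ω)‖ ≤ C) ∧
    StronglyMeasurable (fun ω => T (ξ ω)) ∧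
    ∫ ω, T (ξ ω) ∂P = T m := by
  have : NullSingletonClass μ := ⟨fun x => hac (measure_singleton x)⟩
  have : Fact ((2 : ℝ≥0∞) ≠ ∞) := ⟨ENNReal.ofNat_ne_top⟩
  have hbound := norm_le_of_coeFn_ae_eq_cdf hT
  have hcont : Continuous T := continuous_of_coeFn_ae_eq_cdf ENNReal.ofNat_ne_top hT
  have hmeas : StronglyMeasurable (fun ω => T (ξ ω)) :=
    hcont.stronglyMeasurable_comp_of_measurable_borel hξ
  refine ⟨⟨_, fun ω => hbound (ξ ω)⟩, hmeas, ext_inner_left ℝ fun g => ?_⟩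
  have hg : Integrable g μ := (Lp.memLp g).integrable one_le_two
  rw [← integral_inner (Integrable.of_bound hmeas.aestronglyMeasurable _
      (ae_of_all _ fun ω => hbound (ξ ω))) g]
  simp_rw [inner_eq_integral_setIntegral_Ici_of_coeFn_ae_eq_cdf (hT _) g]
  exact hbar (.ofNormedAddCommGroup _ (continuous_setIntegral_Ici hg) _
    (norm_setIntegral_Ici_le hg))

/-- Let `ξ` be a random element of `M₁(ℝ)` with baricenter `m`, and `μ` a finite measure
absolutely continuous w.r.t. Lebesgue measure on an interval containing `supp m`.
Then `F(ω) := (x ↦ ξ(ω)(−∞,x])`, viewed in `L²(μ)`, is a bounded, strongly measurable random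
element of `L²(μ)`, and its Bochner expectation is the map `x ↦ m(−∞,x]`. -/
theorem stmt5
    {Ω : Type*} [MeasurableSpace Ω] (P : Measure Ω) [IsProbabilityMeasure P]
    (ξ : Ω → ProbabilityMeasure ℝ)
    (hξ : Measurable[_, borel (ProbabilityMeasure ℝ)] ξ)
    (m : ProbabilityMeasure ℝ)
    (hbar : ∀ f : BoundedContinuousFunction ℝ ℝ,
      ∫ ω, (∫ x, f x ∂((ξ ω : Measure ℝ))) ∂P = ∫ x, f x ∂(m : Measure ℝ))
    (μ : Measure ℝ) [IsFiniteMeasure μ]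
    (I : Set ℝ) (hI : I.OrdConnected)
    (hsupp : measureSupport (m : Measure ℝ) ⊆ I)
    (hac : μ ≪ volume.restrict I)
    (T : ProbabilityMeasure ℝ → Lp ℝ 2 μ)
    (hT : ∀ ν : ProbabilityMeasure ℝ,
      (T ν : ℝ → ℝ) =ᵐ[μ] fun x => ((ν : Measure ℝ) (Set.Iic x)).toReal) :
    (∃ C : ℝ, ∀ ω, ‖T (ξ ω)‖ ≤ C) ∧
    StronglyMeasurable (fun ω => T (ξ ω)) ∧
    ∫ ω, T (ξ ω) ∂P = T m :=
  stmt5_general P ξ hξ m hbar μ I hac T hT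
end

section
/- Let ξ be a random element of M₁(ℝ), μ a finite measure equivalent to Lebesgue measure on an interval containing supp(𝔼ξ), F(x) = ξ(−∞, x], and C₀(x,y) = Cov(F(x), F(y)) the covariance kernel. Then each eigenfunction φⱼ of the integral operator C₀^μ on L²(μ) with kernel C₀ associated with a nonzero eigenvalue λⱼ is (has a version that is) a bounded, right-continuous function with left limits (càdlàg). -/
/-!
Since `λ φ = C₀^μ φ` almost everywhere, `ψ := λ⁻¹ C₀^μ φ` is a version of `φ`. The kernel `C₀` is
bounded, and by dominated convergence in `ω` it inherits right-continuity and left limits in each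
variable from the sample CDFs. A second dominated convergence in `y`, with dominating function
`|φ| ∈ L¹(μ)`, transfers these properties to `ψ`.
-/

open MeasureTheory Filter Topology Set TopologicalSpace

lemma measurable_of_continuousWithinAt_Ici {E : Type*} [TopologicalSpace E]
    [PseudoMetrizableSpace E] [MeasurableSpace E] [BorelSpace E] {g : ℝ → E}
    (hg : ∀ x, ContinuousWithinAt g (Ici x) x) : Measurable g := by
  -- `g` is the limit of `g ∘ t n`, where `t n` rounds up to the grid `ℤ / (n + 1)`.
  set t : ℕ → ℝ → ℝ := fun n y => ⌈y * (n + 1)⌉ / (n + 1)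
  have ht_meas : ∀ n, Measurable fun y => g (t n y) := fun n =>
    (measurable_of_countable fun k : ℤ => g (k / (n + 1))).comp
      (Int.measurable_ceil.comp (measurable_id.mul_const _))
  have ht_lim : ∀ y, Tendsto (fun n => t n y) atTop (𝓝[≥] y) := by
    intro y
    have h_ge : ∀ n : ℕ, y ≤ t n y := fun n => by
      rw [le_div_iff₀ (by positivity)]
      exact Int.le_ceil _
    have h_le : ∀ n : ℕ, t n y ≤ y + 1 / (n + 1) := fun n => by
      rw [div_le_iff₀ (by positivity), add_mul, one_div_mul_cancel (by positivity)]
      exact (Int.ceil_lt_add_one _).le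
    refine tendsto_nhdsWithin_of_tendsto_nhds_of_eventually_within _
      (tendsto_of_tendsto_of_tendsto_of_le_of_le tendsto_const_nhds ?_ h_ge h_le)
      (.of_forall h_ge)
    simpa using tendsto_const_nhds.add (tendsto_one_div_add_atTop_nhds_zero_nat (𝕜 := ℝ))
  exact measurable_of_tendsto_metrizable ht_meas
    (tendsto_pi_nhds.2 fun y => (hg y).tendsto.comp (ht_lim y))

def IsCadlag {E : Type*} [TopologicalSpace E] (g : ℝ → E) : Prop :=
  (∀ x, ContinuousWithinAt g (Ici x) x) ∧ ∀ x, ∃ l, Tendsto g (𝓝[<] x) (𝓝 l)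

section IsCadlag

variable {E F : Type*} [TopologicalSpace E] [TopologicalSpace F] {g h : ℝ → E}

lemma Continuous.comp_isCadlag {f : E → F} (hf : Continuous f) (hg : IsCadlag g) :
    IsCadlag (f ∘ g) := by
  refine ⟨fun x => hf.continuousAt.comp_continuousWithinAt (hg.1 x), fun x => ?_⟩
  obtain ⟨l, hl⟩ := hg.2 x
  exact ⟨f l, (hf.tendsto l).comp hl⟩

lemma IsCadlag.sub [Sub E] [ContinuousSub E] (hg : IsCadlag g) (hh : IsCadlag h) :
    IsCadlag (g - h) := by
  refine ⟨fun x => (hg.1 x).sub (hh.1 x), fun x => ?_⟩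
  obtain ⟨l, hl⟩ := hg.2 x
  obtain ⟨l', hl'⟩ := hh.2 x
  exact ⟨l - l', hl.sub hl'⟩

lemma IsCadlag.measurable [PseudoMetrizableSpace E] [MeasurableSpace E] [BorelSpace E]
    (hg : IsCadlag g) : Measurable g :=
  measurable_of_continuousWithinAt_Ici hg.1

end IsCadlag

lemma StieltjesFunction.isCadlag (f : StieltjesFunction ℝ) : IsCadlag f :=
  ⟨f.right_continuous, fun x => ⟨_, f.mono.tendsto_leftLim x⟩⟩

lemma isCadlag_integral {α E : Type*} [MeasurableSpace α] [NormedAddCommGroup E]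
    [NormedSpace ℝ E] {ν : Measure α} {K : ℝ → α → E} {bound : α → ℝ}
    (hK_meas : ∀ x, AEStronglyMeasurable (K x) ν) (hK_bound : ∀ x a, ‖K x a‖ ≤ bound a)
    (h_bound : Integrable bound ν) (hK : ∀ a, IsCadlag fun x => K x a) :
    IsCadlag fun x => ∫ a, K x a ∂ν := by
  have dominated {l : Filter ℝ} [l.IsCountablyGenerated] {L : α → E}
      (hL : ∀ a, Tendsto (K · a) l (𝓝 (L a))) :
      Tendsto (fun x => ∫ a, K x a ∂ν) l (𝓝 (∫ a, L a ∂ν)) :=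
    tendsto_integral_filter_of_dominated_convergence bound (.of_forall hK_meas)
      (.of_forall fun x => .of_forall (hK_bound x)) h_bound (.of_forall hL)
  refine ⟨fun x => dominated fun a => (hK a).1 x, fun x => ?_⟩
  choose L hL using fun a => (hK a).2 x
  exact ⟨_, dominated hL⟩

lemma measurable_measure_of_isClosed {X : Type*} [TopologicalSpace X] [MeasurableSpace X]
    [OpensMeasurableSpace X] [HasOuterApproxClosed X] {s : Set X} (hs : IsClosed s) :
    Measurable[borel (ProbabilityMeasure X)] fun ν : ProbabilityMeasure X => (ν : Measure X) s := by
  -- `ν s` is the limit of integrals of bounded continuous functions, which are weakly continuous.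
  let : MeasurableSpace (ProbabilityMeasure X) := borel _
  have : BorelSpace (ProbabilityMeasure X) := ⟨rfl⟩
  refine measurable_of_tendsto_metrizable
    (f := fun n ν => (ν.toFiniteMeasure.testAgainstNN (hs.apprSeq n) : ENNReal))
    (fun n => (ENNReal.continuous_coe.comp
      (ProbabilityMeasure.continuous_testAgainstNN_eval _)).measurable)
    (tendsto_pi_nhds.2 fun ν => ?_)
  simp_rw [FiniteMeasure.testAgainstNN_coe_eq]
  exact HasOuterApproxClosed.tendsto_lintegral_apprSeq hs _

section RandomCDF

open ProbabilityTheory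

variable {Ω : Type*} [MeasurableSpace Ω] (P : Measure Ω) (ξ : Ω → ProbabilityMeasure ℝ)

noncomputable def meanCDF (x : ℝ) : ℝ :=
  ∫ ω, cdf (ξ ω : Measure ℝ) x ∂P

noncomputable def centeredCDF (ω : Ω) (x : ℝ) : ℝ :=
  cdf (ξ ω : Measure ℝ) x - meanCDF P ξ x

variable {P ξ}

lemma norm_cdf_le_one (ν : ProbabilityMeasure ℝ) (x : ℝ) : ‖cdf (ν : Measure ℝ) x‖ ≤ 1 := by
  rw [Real.norm_of_nonneg (cdf_nonneg _ x)]
  exact cdf_le_one _ x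

lemma measurable_cdf_apply (hξ : Measurable[_, borel (ProbabilityMeasure ℝ)] ξ) (x : ℝ) :
    Measurable fun ω => cdf (ξ ω : Measure ℝ) x := by
  simp_rw [cdf_eq_real, measureReal_def]
  exact (measurable_measure_of_isClosed isClosed_Iic).ennreal_toReal.comp hξ

lemma measurable_centeredCDF_apply (hξ : Measurable[_, borel (ProbabilityMeasure ℝ)] ξ)
    (x : ℝ) : Measurable fun ω => centeredCDF P ξ ω x :=
  (measurable_cdf_apply hξ x).sub_const _

variable [IsProbabilityMeasure P]

lemma meanCDF_mem_Icc (hξ : Measurable[_, borel (ProbabilityMeasure ℝ)] ξ) (x : ℝ) :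
    meanCDF P ξ x ∈ Icc 0 1 := by
  refine ⟨integral_nonneg fun _ => cdf_nonneg _ x, ?_⟩
  calc meanCDF P ξ x ≤ ∫ _, (1 : ℝ) ∂P :=
        integral_mono (.of_bound (measurable_cdf_apply hξ x).aestronglyMeasurable 1
          (.of_forall fun _ => norm_cdf_le_one _ x)) (integrable_const 1) fun _ => cdf_le_one _ x
    _ = 1 := by simp

lemma isCadlag_meanCDF (hξ : Measurable[_, borel (ProbabilityMeasure ℝ)] ξ) :
    IsCadlag (meanCDF P ξ) :=
  isCadlag_integral (fun x => (measurable_cdf_apply hξ x).aestronglyMeasurable)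
    (fun x _ => norm_cdf_le_one _ x) (integrable_const 1) fun _ => (cdf _).isCadlag

lemma norm_centeredCDF_le_one (hξ : Measurable[_, borel (ProbabilityMeasure ℝ)] ξ) (ω : Ω)
    (x : ℝ) : ‖centeredCDF P ξ ω x‖ ≤ 1 :=
  abs_sub_le_of_nonneg_of_le (cdf_nonneg _ x) (cdf_le_one _ x) (meanCDF_mem_Icc hξ x).1
    (meanCDF_mem_Icc hξ x).2

lemma isCadlag_centeredCDF (hξ : Measurable[_, borel (ProbabilityMeasure ℝ)] ξ) (ω : Ω) :
    IsCadlag (centeredCDF P ξ ω) :=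
  (cdf _).isCadlag.sub (isCadlag_meanCDF hξ)

end RandomCDF

section Covariance

variable {Ω : Type*} [MeasurableSpace Ω] {P : Measure Ω} {Y : Ω → ℝ → ℝ}

lemma isCadlag_integral_mul_apply [IsFiniteMeasure P] (hY_meas : ∀ x, Measurable fun ω => Y ω x)
    (hY_bound : ∀ ω x, ‖Y ω x‖ ≤ 1) (hY : ∀ ω, IsCadlag (Y ω)) (y : ℝ) :
    IsCadlag fun x => ∫ ω, Y ω x * Y ω y ∂P :=
  isCadlag_integral (fun x => ((hY_meas x).mul (hY_meas y)).aestronglyMeasurable)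
    (fun x ω => norm_mul_le_of_le (hY_bound ω x) (hY_bound ω y)) (integrable_const _)
    fun ω => (continuous_mul_const _).comp_isCadlag (hY ω)

lemma measurable_integral_mul_apply [IsFiniteMeasure P]
    (hY_meas : ∀ x, Measurable fun ω => Y ω x) (hY_bound : ∀ ω x, ‖Y ω x‖ ≤ 1)
    (hY : ∀ ω, IsCadlag (Y ω)) (x : ℝ) : Measurable fun y => ∫ ω, Y ω x * Y ω y ∂P := by
  simp_rw [mul_comm (Y _ x)]
  exact (isCadlag_integral_mul_apply hY_meas hY_bound hY x).measurable

lemma norm_integral_mul_le_one [IsProbabilityMeasure P] (hY_bound : ∀ ω x, ‖Y ω x‖ ≤ 1)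
    (x y : ℝ) : ‖∫ ω, Y ω x * Y ω y ∂P‖ ≤ 1 := by
  simpa using norm_integral_le_of_norm_le_const (μ := P)
    (.of_forall fun ω => norm_mul_le_of_le (hY_bound ω x) (hY_bound ω y))

end Covariance

section IntegralOperator

variable {μ : Measure ℝ} {K : ℝ → ℝ → ℝ} {C : ℝ} {φ : ℝ → ℝ}

lemma isCadlag_integral_kernel_mul (hK_meas : ∀ x, Measurable (K x))
    (hK_bound : ∀ x y, ‖K x y‖ ≤ C) (hK : ∀ y, IsCadlag fun x => K x y) (hφ : Integrable φ μ) :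
    IsCadlag fun x => ∫ y, K x y * φ y ∂μ :=
  isCadlag_integral (fun x => (hK_meas x).aestronglyMeasurable.mul hφ.aestronglyMeasurable)
    (fun x y => norm_mul_le_of_le (hK_bound x y) le_rfl) (hφ.norm.const_mul C)
    fun y => (continuous_mul_const _).comp_isCadlag (hK y)

lemma norm_integral_kernel_mul_le (hK_bound : ∀ x y, ‖K x y‖ ≤ C) (hφ : Integrable φ μ)
    (x : ℝ) : ‖∫ y, K x y * φ y ∂μ‖ ≤ C * ∫ y, ‖φ y‖ ∂μ := by
  rw [← integral_const_mul]
  exact norm_integral_le_of_norm_le (hφ.norm.const_mul C)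
    (.of_forall fun y => norm_mul_le_of_le (hK_bound x y) le_rfl)

end IntegralOperator

theorem stmt8_general
    {Ω : Type*} [MeasurableSpace Ω] (P : Measure Ω) [IsProbabilityMeasure P]
    (ξ : Ω → ProbabilityMeasure ℝ)
    (hξ : Measurable[_, borel (ProbabilityMeasure ℝ)] ξ)
    (μ : Measure ℝ) [IsFiniteMeasure μ]
    -- the random CDF, its mean and covariance kernel
    (F : Ω → ℝ → ℝ) (hF : ∀ ω x, F ω x = (((ξ ω) : Measure ℝ) (Set.Iic x)).toReal)
    (EF : ℝ → ℝ) (hEF : ∀ x, EF x = ∫ ω, F ω x ∂P)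
    (C₀ : ℝ → ℝ → ℝ)
    (hC₀ : ∀ x y, C₀ x y = ∫ ω, (F ω x - EF x) * (F ω y - EF y) ∂P)
    -- an eigenfunction associated with a nonzero eigenvalue
    (φ : ℝ → ℝ) (hφ : MemLp φ 2 μ)
    (lam : ℝ) (hlam : lam ≠ 0)
    (heig : ∀ᵐ x ∂μ, ∫ y, C₀ x y * φ y ∂μ = lam * φ x) :
    ∃ ψ : ℝ → ℝ, ψ =ᵐ[μ] φ ∧
      (∃ M : ℝ, ∀ x, |ψ x| ≤ M) ∧
      (∀ x, ContinuousWithinAt ψ (Set.Ici x) x) ∧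
      (∀ x, ∃ l : ℝ, Filter.Tendsto ψ (nhdsWithin x (Set.Iio x)) (nhds l)) := by
  have hF_cdf : ∀ ω x, F ω x = ProbabilityTheory.cdf (ξ ω : Measure ℝ) x := fun ω x => by
    rw [hF, ProbabilityTheory.cdf_eq_real, measureReal_def]
  have hC₀_cov : C₀ = fun x y => ∫ ω, centeredCDF P ξ ω x * centeredCDF P ξ ω y ∂P := by
    ext x y
    simp only [hC₀, hEF, hF_cdf, centeredCDF, meanCDF]
  have hY_meas := measurable_centeredCDF_apply (P := P) hξ
  have hY_bound := norm_centeredCDF_le_one (P := P) hξ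
  have hY := isCadlag_centeredCDF (P := P) hξ
  have hφ_int : Integrable φ μ := hφ.integrable one_le_two
  have hK_bound : ∀ x y, ‖C₀ x y‖ ≤ 1 := hC₀_cov ▸ norm_integral_mul_le_one hY_bound
  have hψ : IsCadlag fun x => lam⁻¹ * ∫ y, C₀ x y * φ y ∂μ :=
    (continuous_const_mul _).comp_isCadlag <| isCadlag_integral_kernel_mul
      (hC₀_cov ▸ measurable_integral_mul_apply hY_meas hY_bound hY) hK_bound
      (hC₀_cov ▸ isCadlag_integral_mul_apply hY_meas hY_bound hY) hφ_int
  refine ⟨_, ?_, ⟨|lam⁻¹| * (1 * ∫ y, ‖φ y‖ ∂μ), fun x => ?_⟩, hψ⟩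
  · filter_upwards [heig] with x hx
    rw [hx, inv_mul_cancel_left₀ hlam]
  · rw [abs_mul]
    exact mul_le_mul_of_nonneg_left (norm_integral_kernel_mul_le hK_bound hφ_int x) (abs_nonneg _)

/-- Every eigenfunction of the covariance integral operator `C₀^μ` of the random CDF
`F(ω)(x) = ξ(ω)(−∞,x]` associated with a nonzero eigenvalue has a version which is bounded
and càdlàg (right-continuous with left limits). Here `μ` is a finite measure equivalent to
Lebesgue measure on an interval containing the support of the baricenter `m` of `ξ`. -/
theorem stmt8
    {Ω : Type*} [MeasurableSpace Ω] (P : Measure Ω) [IsProbabilityMeasure P]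
    (ξ : Ω → ProbabilityMeasure ℝ)
    (hξ : Measurable[_, borel (ProbabilityMeasure ℝ)] ξ)
    (m : ProbabilityMeasure ℝ)
    (hbar : ∀ f : BoundedContinuousFunction ℝ ℝ,
      ∫ ω, (∫ x, f x ∂((ξ ω : Measure ℝ))) ∂P = ∫ x, f x ∂(m : Measure ℝ))
    (μ : Measure ℝ) [IsFiniteMeasure μ]
    (I : Set ℝ) (hI : I.OrdConnected)
    (hsupp : measureSupport (m : Measure ℝ) ⊆ I)
    (hac : μ ≪ volume.restrict I) (hac' : volume.restrict I ≪ μ)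
    -- the random CDF, its mean and covariance kernel
    (F : Ω → ℝ → ℝ) (hF : ∀ ω x, F ω x = (((ξ ω) : Measure ℝ) (Set.Iic x)).toReal)
    (EF : ℝ → ℝ) (hEF : ∀ x, EF x = ∫ ω, F ω x ∂P)
    (C₀ : ℝ → ℝ → ℝ)
    (hC₀ : ∀ x y, C₀ x y = ∫ ω, (F ω x - EF x) * (F ω y - EF y) ∂P)
    -- an eigenfunction associated with a nonzero eigenvalue
    (φ : ℝ → ℝ) (hφ : MemLp φ 2 μ)
    (lam : ℝ) (hlam : lam ≠ 0)
    (heig : ∀ᵐ x ∂μ, ∫ y, C₀ x y * φ y ∂μ = lam * φ x) :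
    ∃ ψ : ℝ → ℝ, ψ =ᵐ[μ] φ ∧
      (∃ M : ℝ, ∀ x, |ψ x| ≤ M) ∧
      (∀ x, ContinuousWithinAt ψ (Set.Ici x) x) ∧
      (∀ x, ∃ l : ℝ, Filter.Tendsto ψ (nhdsWithin x (Set.Iio x)) (nhds l)) :=
  stmt8_general P ξ hξ μ F hF EF hEF C₀ hC₀ φ hφ lam hlam heig
end

section
/- Let (ξ_t, X_τ) be a cyclic-independent conjugate process such that (1/n) Σ_{t=0}^{n−1} ξ_t → 𝔼ξ₀ almost surely in the weak* topology. Then for any sequence (τ_i) with τ_i ∈ [i, i+1) and any bounded continuous f : ℝ → ℝ, (1/n) Σ_{i=0}^{n−1} f(X_{τ_i}) → 𝔼[f(X₀)] in probability. -/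
open MeasureTheory ProbabilityTheory Filter

noncomputable instance : MeasurableSpace (ProbabilityMeasure ℝ) := borel _

open Set Topology

/-! Put `Y_i = f (X_{τ_i})` and `g_i = ∫ f dξ_i`. The conjugacy equation says that, given `Ξ`, the
law of `X_σ` is `ξ_{⌊σ⌋}`, so `g_i = 𝔼[Y_i | Ξ]`; cyclic independence makes `Y_i` and `Y_j`
conditionally independent for `i ≠ j`, so the fluctuations `Y_i - g_i` are orthogonal in `L²` and
their Cesàro means have second moment `O(1/n)`. By ergodicity the Cesàro means of `g_i` converge
a.s., hence in `L²` by bounded convergence, to `∫ f d(𝔼ξ₀) = 𝔼 f(X₀)`. Chebyshev's inequality turns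
`L²` convergence into convergence in probability. -/

instance : BorelSpace (ProbabilityMeasure ℝ) := ⟨rfl⟩

noncomputable def cesaroMean (u : ℕ → ℝ) (n : ℕ) : ℝ := (n : ℝ)⁻¹ * ∑ i ∈ Finset.range n, u i

lemma cesaroMean_sub (u v : ℕ → ℝ) (n : ℕ) :
    cesaroMean (fun i => u i - v i) n = cesaroMean u n - cesaroMean v n := by
  simp only [cesaroMean, Finset.sum_sub_distrib, mul_sub]

lemma abs_cesaroMean_le {u : ℕ → ℝ} {B : ℝ} (hB : 0 ≤ B) (hu : ∀ i, |u i| ≤ B) (n : ℕ) :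
    |cesaroMean u n| ≤ B := by
  rcases n.eq_zero_or_pos with rfl | hn
  · simpa [cesaroMean] using hB
  have hsum : |∑ i ∈ Finset.range n, u i| ≤ n * B := by
    simpa using (Finset.abs_sum_le_sum_abs u (Finset.range n)).trans
      (Finset.sum_le_sum fun i _ => hu i)
  rw [cesaroMean, abs_mul, abs_inv, Nat.abs_cast, inv_mul_le_iff₀ (by exact_mod_cast hn)]
  exact hsum

section L2

variable {Ω : Type*} {mΩ : MeasurableSpace Ω} {μ : Measure Ω}

lemma aestronglyMeasurable_cesaroMean {Y : ℕ → Ω → ℝ} (hY : ∀ i, AEStronglyMeasurable (Y i) μ)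
    (n : ℕ) : AEStronglyMeasurable (fun ω => cesaroMean (fun i => Y i ω) n) μ := by
  unfold cesaroMean; fun_prop

lemma integral_sq_cesaroMean_le [IsProbabilityMeasure μ] {D : ℕ → Ω → ℝ} {B : ℝ}
    (hD : ∀ i, AEStronglyMeasurable (D i) μ) (hB : ∀ i ω, |D i ω| ≤ B)
    (horth : Pairwise fun i j => ∫ ω, D i ω * D j ω ∂μ = 0) (n : ℕ) :
    ∫ ω, cesaroMean (fun i => D i ω) n ^ 2 ∂μ ≤ B ^ 2 / n := by
  have hint : ∀ i j, Integrable (fun ω => D i ω * D j ω) μ := fun i j =>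
    .of_bound ((hD i).mul (hD j)) (B * B) (ae_of_all _ fun ω => by
      simpa [abs_mul] using
        mul_le_mul (hB i ω) (hB j ω) (abs_nonneg _) ((abs_nonneg _).trans (hB i ω)))
  have hexpand : ∀ ω, cesaroMean (fun i => D i ω) n ^ 2
      = (n : ℝ)⁻¹ ^ 2 * ∑ i ∈ Finset.range n, ∑ j ∈ Finset.range n, D i ω * D j ω := fun ω => by
    rw [cesaroMean, mul_pow, sq (∑ _ ∈ _, _), Finset.sum_mul_sum]
  have hdiag : ∀ i ∈ Finset.range n,
      ∑ j ∈ Finset.range n, ∫ ω, D i ω * D j ω ∂μ = ∫ ω, D i ω * D i ω ∂μ := fun i hi =>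
    Finset.sum_eq_single_of_mem i hi fun j _ hji => horth hji.symm
  have hdiag_le : ∀ i ∈ Finset.range n, ∫ ω, D i ω * D i ω ∂μ ≤ B ^ 2 := fun i _ => by
    refine (integral_mono (hint i i) (integrable_const (B ^ 2)) fun ω => ?_).trans_eq (by simp)
    rw [← sq, ← sq_abs]
    exact pow_le_pow_left₀ (abs_nonneg _) (hB i ω) 2
  calc ∫ ω, cesaroMean (fun i => D i ω) n ^ 2 ∂μ
      = (n : ℝ)⁻¹ ^ 2 * ∑ i ∈ Finset.range n, ∑ j ∈ Finset.range n, ∫ ω, D i ω * D j ω ∂μ := by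
        simp_rw [hexpand, integral_const_mul]
        rw [integral_finsetSum _ fun i _ => integrable_finsetSum _ fun j _ => hint i j]
        simp_rw [integral_finsetSum _ fun j _ => hint _ j]
    _ ≤ (n : ℝ)⁻¹ ^ 2 * (n * B ^ 2) := by
        rw [Finset.sum_congr rfl hdiag]
        gcongr
        simpa using Finset.sum_le_card_nsmul _ _ _ hdiag_le
    _ = B ^ 2 / n := by
        rcases eq_or_ne (n : ℝ) 0 with hn | hn
        · simp [hn]
        · field_simp

lemma tendsto_integral_sq_sub_of_ae_tendsto [IsFiniteMeasure μ] {Z : ℕ → Ω → ℝ} {a B : ℝ}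
    (hZ : ∀ n, AEStronglyMeasurable (Z n) μ) (hB : ∀ n ω, |Z n ω| ≤ B)
    (hlim : ∀ᵐ ω ∂μ, Tendsto (fun n => Z n ω) atTop (𝓝 a)) :
    Tendsto (fun n => ∫ ω, (Z n ω - a) ^ 2 ∂μ) atTop (𝓝 0) := by
  have hbound : ∀ n ω, ‖(Z n ω - a) ^ 2‖ ≤ (B + |a|) ^ 2 := fun n ω => by
    rw [Real.norm_eq_abs, abs_pow]
    exact pow_le_pow_left₀ (abs_nonneg _) ((abs_sub _ _).trans (by linarith [hB n ω])) 2
  simpa using tendsto_integral_of_dominated_convergence (f := fun _ => 0)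
    (fun _ => (B + |a|) ^ 2)
    (fun n => ((hZ n).sub aestronglyMeasurable_const).pow 2) (integrable_const _)
    (fun n => ae_of_all _ (hbound n))
    (hlim.mono fun ω h => by simpa using (h.sub_const a).pow 2)

lemma tendsto_measure_lt_abs_of_tendsto_integral_sq [IsFiniteMeasure μ] {ι : Type*}
    {l : Filter ι} {Z : ι → Ω → ℝ} (hZ : ∀ n, Integrable (fun ω => Z n ω ^ 2) μ)
    (hlim : Tendsto (fun n => ∫ ω, Z n ω ^ 2 ∂μ) l (𝓝 0)) {ε : ℝ} (hε : 0 < ε) :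
    Tendsto (fun n => μ {ω | ε < |Z n ω|}) l (𝓝 0) := by
  rw [← ENNReal.tendsto_toReal_zero_iff fun _ => measure_ne_top _ _]
  have hcheb : ∀ n, μ.real {ω | ε < |Z n ω|} ≤ (∫ ω, Z n ω ^ 2 ∂μ) / ε ^ 2 := fun n => by
    rw [le_div_iff₀' (by positivity)]
    refine le_trans ?_ (mul_meas_ge_le_integral_of_nonneg (ae_of_all _ fun ω => sq_nonneg _)
      (hZ n) (ε ^ 2))
    gcongr
    · exact measure_ne_top _ _
    · intro hω
      exact (pow_le_pow_left₀ hε.le hω.le 2).trans_eq (sq_abs _)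
  have hbound : Tendsto (fun n => (∫ ω, Z n ω ^ 2 ∂μ) / ε ^ 2) l (𝓝 0) := by
    simpa using hlim.div_const (ε ^ 2)
  exact squeeze_zero (fun _ => measureReal_nonneg) hcheb hbound

lemma integrable_sq_of_abs_le [IsFiniteMeasure μ] {h : Ω → ℝ} (hm : AEStronglyMeasurable h μ)
    {B : ℝ} (hB : ∀ ω, |h ω| ≤ B) : Integrable (fun ω => h ω ^ 2) μ :=
  .of_bound (hm.pow 2) (B ^ 2) (ae_of_all _ fun ω => by
    simpa using pow_le_pow_left₀ (abs_nonneg _) (hB ω) 2)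

lemma tendsto_measure_lt_abs_cesaroMean_sub [IsProbabilityMeasure μ] {Y g : ℕ → Ω → ℝ}
    {a C : ℝ} (hY : ∀ i, AEStronglyMeasurable (Y i) μ) (hg : ∀ i, AEStronglyMeasurable (g i) μ)
    (hYC : ∀ i ω, |Y i ω| ≤ C) (hgC : ∀ i ω, |g i ω| ≤ C)
    (horth : Pairwise fun i j => ∫ ω, (Y i ω - g i ω) * (Y j ω - g j ω) ∂μ = 0)
    (hlim : ∀ᵐ ω ∂μ, Tendsto (cesaroMean fun i => g i ω) atTop (𝓝 a)) {ε : ℝ} (hε : 0 < ε) :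
    Tendsto (fun n => μ {ω | ε < |cesaroMean (fun i => Y i ω) n - a|}) atTop (𝓝 0) := by
  obtain ⟨ω₀⟩ := nonempty_of_isProbabilityMeasure μ
  have hC : 0 ≤ C := (abs_nonneg _).trans (hYC 0 ω₀)
  have hD : ∀ i, AEStronglyMeasurable (fun ω => Y i ω - g i ω) μ := fun i => (hY i).sub (hg i)
  have hDC : ∀ i ω, |Y i ω - g i ω| ≤ 2 * C := fun i ω =>
    (abs_sub _ _).trans (by linarith [hYC i ω, hgC i ω])
  have hcentered : ∀ (h : ℕ → Ω → ℝ), (∀ i ω, |h i ω| ≤ C) → ∀ n ω,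
      |cesaroMean (fun i => h i ω) n - a| ≤ C + |a| := fun h hh n ω =>
    (abs_sub _ _).trans (by linarith [abs_cesaroMean_le hC (fun i => hh i ω) n])
  have hintY : ∀ n, Integrable (fun ω => (cesaroMean (fun i => Y i ω) n - a) ^ 2) μ :=
    fun n => integrable_sq_of_abs_le ((aestronglyMeasurable_cesaroMean hY n).sub
      aestronglyMeasurable_const) (hcentered Y hYC n)
  have hintg : ∀ n, Integrable (fun ω => (cesaroMean (fun i => g i ω) n - a) ^ 2) μ :=
    fun n => integrable_sq_of_abs_le ((aestronglyMeasurable_cesaroMean hg n).sub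
      aestronglyMeasurable_const) (hcentered g hgC n)
  have hintD : ∀ n, Integrable (fun ω => cesaroMean (fun i => Y i ω - g i ω) n ^ 2) μ :=
    fun n => integrable_sq_of_abs_le (aestronglyMeasurable_cesaroMean hD n)
      fun ω => abs_cesaroMean_le (by linarith) (fun i => hDC i ω) n
  have hsplit : ∀ n ω, (cesaroMean (fun i => Y i ω) n - a) ^ 2 ≤
      2 * (cesaroMean (fun i => Y i ω - g i ω) n ^ 2 + (cesaroMean (fun i => g i ω) n - a) ^ 2) :=
    fun n ω => by
      rw [cesaroMean_sub]
      simpa using add_sq_le (a := cesaroMean (fun i => Y i ω) n - cesaroMean (fun i => g i ω) n)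
        (b := cesaroMean (fun i => g i ω) n - a)
  have hbound : ∀ n, ∫ ω, (cesaroMean (fun i => Y i ω) n - a) ^ 2 ∂μ ≤
      2 * ((2 * C) ^ 2 / n + ∫ ω, (cesaroMean (fun i => g i ω) n - a) ^ 2 ∂μ) := fun n => by
    calc ∫ ω, (cesaroMean (fun i => Y i ω) n - a) ^ 2 ∂μ
        ≤ ∫ ω, 2 * (cesaroMean (fun i => Y i ω - g i ω) n ^ 2
            + (cesaroMean (fun i => g i ω) n - a) ^ 2) ∂μ :=
          integral_mono (hintY n) (((hintD n).add (hintg n)).const_mul 2) (hsplit n)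
      _ = 2 * (∫ ω, cesaroMean (fun i => Y i ω - g i ω) n ^ 2 ∂μ
            + ∫ ω, (cesaroMean (fun i => g i ω) n - a) ^ 2 ∂μ) := by
          rw [integral_const_mul, integral_add (hintD n) (hintg n)]
      _ ≤ _ := by grw [integral_sq_cesaroMean_le hD hDC horth n]
  have hlimg := tendsto_integral_sq_sub_of_ae_tendsto (aestronglyMeasurable_cesaroMean hg)
    (fun n ω => abs_cesaroMean_le hC (fun i => hgC i ω) n) hlim
  refine tendsto_measure_lt_abs_of_tendsto_integral_sq hintY ?_ hε
  refine squeeze_zero (fun n => integral_nonneg fun ω => sq_nonneg _) hbound ?_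
  simpa using ((tendsto_const_div_atTop_nhds_zero_nat ((2 * C) ^ 2)).add hlimg).const_mul 2

end L2

lemma comap_eq_generateFrom_preimage_Iic_rat {Ω : Type*} (Y : Ω → ℝ) :
    MeasurableSpace.comap Y inferInstance
      = MeasurableSpace.generateFrom (preimage Y '' ⋃ q : ℚ, {Iic (q : ℝ)}) := by
  rw [← MeasurableSpace.comap_generateFrom, ← Real.borel_eq_generateFrom_Iic_rat,
    BorelSpace.measurable_eq (α := ℝ)]

section Orthogonality

variable {Ω : Type*} {m mΩ : MeasurableSpace Ω} {μ : Measure Ω} [IsFiniteMeasure μ]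

lemma integral_mul_eq_zero_of_condExp_eq_zero (hm : m ≤ mΩ) {g W : Ω → ℝ} {C : ℝ}
    (hg : StronglyMeasurable[m] g) (hgC : ∀ ω, |g ω| ≤ C) (hW : Integrable W μ)
    (hW0 : μ[W|m] =ᵐ[μ] 0) : ∫ ω, (g * W) ω ∂μ = 0 := by
  have hpull := condExp_stronglyMeasurable_mul_of_bound hm hg hW C (ae_of_all _ hgC)
  calc ∫ ω, (g * W) ω ∂μ = ∫ ω, (μ[g * W|m]) ω ∂μ := (integral_condExp hm).symm
    _ = 0 := by
      have hzero : g * μ[W|m] =ᵐ[μ] 0 := hW0.mono fun ω h => by simp [h]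
      simp [integral_congr_ae (hpull.trans hzero)]

lemma condExp_sub_ae_eq_zero (hm : m ≤ mΩ) {V v : Ω → ℝ} (hV : Integrable V μ)
    (hv : StronglyMeasurable[m] v) (hvi : Integrable v μ) (hVv : μ[V|m] =ᵐ[μ] v) :
    μ[V - v|m] =ᵐ[μ] 0 := by
  filter_upwards [condExp_sub hV hvi m, hVv] with ω hsub hω
  rw [hsub, Pi.sub_apply, condExp_of_stronglyMeasurable hm hv hvi, hω, Pi.zero_apply, sub_self]

lemma integral_mul_sub_eq_zero_of_condExp (hm : m ≤ mΩ) {Y Z g h : Ω → ℝ} {C : ℝ}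
    (hg : StronglyMeasurable[m] g) (hh : StronglyMeasurable[m] h) (hgC : ∀ ω, |g ω| ≤ C)
    (hhC : ∀ ω, |h ω| ≤ C) (hY : Integrable Y μ) (hZ : Integrable Z μ)
    (hYZ : Integrable (Y * Z) μ) (hYg : μ[Y|m] =ᵐ[μ] g) (hZh : μ[Z|m] =ᵐ[μ] h)
    (hYZgh : μ[Y * Z|m] =ᵐ[μ] g * h) :
    ∫ ω, (Y ω - g ω) * (Z ω - h ω) ∂μ = 0 := by
  have hgi : Integrable g μ := .of_bound (hg.mono hm).aestronglyMeasurable C (ae_of_all _ hgC)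
  have hhi : Integrable h μ := .of_bound (hh.mono hm).aestronglyMeasurable C (ae_of_all _ hhC)
  have hghi : Integrable (g * h) μ :=
    hhi.bdd_mul (hg.mono hm).aestronglyMeasurable (ae_of_all _ hgC)
  have hgZ : Integrable (g * (Z - h)) μ :=
    (hZ.sub hhi).bdd_mul (hg.mono hm).aestronglyMeasurable (ae_of_all _ hgC)
  have hhY : Integrable (h * (Y - g)) μ :=
    (hY.sub hgi).bdd_mul (hh.mono hm).aestronglyMeasurable (ae_of_all _ hhC)
  have hprod : ∫ ω, (Y * Z - g * h) ω ∂μ = 0 := by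
    rw [← integral_condExp hm, integral_congr_ae
      (condExp_sub_ae_eq_zero hm hYZ (hg.mul hh) hghi hYZgh)]
    simp
  calc ∫ ω, (Y ω - g ω) * (Z ω - h ω) ∂μ
      = ∫ ω, (Y * Z - g * h - g * (Z - h) - h * (Y - g)) ω ∂μ := by
        congr 1 with ω
        simp only [Pi.sub_apply, Pi.mul_apply]
        ring
    _ = 0 := by
      rw [integral_sub' ((hYZ.sub hghi).sub hgZ) hhY, integral_sub' (hYZ.sub hghi) hgZ, hprod,
        integral_mul_eq_zero_of_condExp_eq_zero hm hg hgC (hZ.sub hhi)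
          (condExp_sub_ae_eq_zero hm hZ hh hhi hZh),
        integral_mul_eq_zero_of_condExp_eq_zero hm hh hhC (hY.sub hgi)
          (condExp_sub_ae_eq_zero hm hY hg hgi hYg)]
      simp

end Orthogonality

section Conditional

variable {Ω : Type*} {m : MeasurableSpace Ω} [mΩ : MeasurableSpace Ω] [StandardBorelSpace Ω]
  {μ : Measure Ω} [IsFiniteMeasure μ]

lemma ProbabilityTheory.CondIndepFun.ae_indepFun_condExpKernel (hm : m ≤ mΩ) {Y Z : Ω → ℝ}
    (hY : Measurable Y) (hZ : Measurable Z) (h : CondIndepFun m hm Y Z μ) :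
    ∀ᵐ ω ∂μ, IndepFun Y Z (condExpKernel μ m ω) := by
  rw [CondIndepFun, Kernel.indepFun_iff_measure_inter_preimage_eq_mul] at h
  -- The sets `Iic q`, `q : ℚ`, generate the Borel σ-algebra, so countably many a.e. identities
  -- pin down the joint conditional law.
  have hrat : ∀ᵐ ω ∂μ, ∀ q r : ℚ, condExpKernel μ m ω (Y ⁻¹' Iic (q : ℝ) ∩ Z ⁻¹' Iic (r : ℝ))
      = condExpKernel μ m ω (Y ⁻¹' Iic (q : ℝ)) * condExpKernel μ m ω (Z ⁻¹' Iic (r : ℝ)) :=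
    ae_of_ae_trim hm <| ae_all_iff.2 fun q => ae_all_iff.2 fun r =>
      h _ _ measurableSet_Iic measurableSet_Iic
  filter_upwards [hrat] with ω hω
  refine IndepSets.indep hY.comap_le hZ.comap_le (Real.isPiSystem_Iic_rat.comap Y)
    (Real.isPiSystem_Iic_rat.comap Z) (comap_eq_generateFrom_preimage_Iic_rat Y)
    (comap_eq_generateFrom_preimage_Iic_rat Z) ?_
  rintro _ _ ⟨_, hs, rfl⟩ ⟨_, ht, rfl⟩
  simp only [mem_iUnion, mem_singleton_iff] at hs ht
  obtain ⟨q, rfl⟩ := hs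
  obtain ⟨r, rfl⟩ := ht
  exact ae_of_all _ fun _ => hω q r

lemma ProbabilityTheory.CondIndepFun.condExp_mul_ae_eq (hm : m ≤ mΩ) {Y Z : Ω → ℝ}
    (hY : Measurable Y) (hZ : Measurable Z) (hYi : Integrable Y μ) (hZi : Integrable Z μ)
    (hYZ : Integrable (Y * Z) μ) (h : CondIndepFun m hm Y Z μ) :
    μ[Y * Z|m] =ᵐ[μ] μ[Y|m] * μ[Z|m] := by
  filter_upwards [condExp_ae_eq_integral_condExpKernel hm hYZ,
    condExp_ae_eq_integral_condExpKernel hm hYi, condExp_ae_eq_integral_condExpKernel hm hZi,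
    h.ae_indepFun_condExpKernel hm hY hZ] with ω hYZω hYω hZω hindep
  rw [hYZω, Pi.mul_apply, hYω, hZω]
  exact hindep.integral_mul_eq_mul_integral hY.aestronglyMeasurable hZ.aestronglyMeasurable

lemma ProbabilityTheory.CondIndepFun.integral_mul_sub_eq_zero (hm : m ≤ mΩ)
    {Y Z g h : Ω → ℝ} {C : ℝ} (hindep : CondIndepFun m hm Y Z μ) (hY : Measurable Y)
    (hZ : Measurable Z) (hYC : ∀ ω, |Y ω| ≤ C) (hZC : ∀ ω, |Z ω| ≤ C)
    (hg : StronglyMeasurable[m] g) (hh : StronglyMeasurable[m] h) (hgC : ∀ ω, |g ω| ≤ C)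
    (hhC : ∀ ω, |h ω| ≤ C) (hYg : μ[Y|m] =ᵐ[μ] g) (hZh : μ[Z|m] =ᵐ[μ] h) :
    ∫ ω, (Y ω - g ω) * (Z ω - h ω) ∂μ = 0 := by
  have hYi : Integrable Y μ := .of_bound hY.aestronglyMeasurable C (ae_of_all _ hYC)
  have hZi : Integrable Z μ := .of_bound hZ.aestronglyMeasurable C (ae_of_all _ hZC)
  have hYZ : Integrable (Y * Z) μ := hZi.bdd_mul hY.aestronglyMeasurable (ae_of_all _ hYC)
  exact integral_mul_sub_eq_zero_of_condExp hm hg hh hgC hhC hYi hZi hYZ hYg hZh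
    ((hindep.condExp_mul_ae_eq hm hY hZ hYi hZi hYZ).trans (hYg.mul hZh))

lemma ae_map_condExpKernel_eq (hm : m ≤ mΩ) {Y : Ω → ℝ} (hY : Measurable Y)
    {ν : Ω → ProbabilityMeasure ℝ}
    (hlaw : ∀ B : Set ℝ, MeasurableSet B →
      μ[(Y ⁻¹' B).indicator fun _ => (1 : ℝ)|m] =ᵐ[μ] fun ω => ((ν ω : Measure ℝ) B).toReal) :
    ∀ᵐ ω ∂μ, (condExpKernel μ m ω).map Y = ν ω := by
  have hrat : ∀ᵐ ω ∂μ, ∀ q : ℚ,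
      (condExpKernel μ m ω).map Y (Iic (q : ℝ)) = (ν ω : Measure ℝ) (Iic (q : ℝ)) := by
    refine ae_all_iff.2 fun q => ?_
    filter_upwards [hlaw _ measurableSet_Iic,
      condExpKernel_ae_eq_condExp hm (hY measurableSet_Iic)] with ω hνω hκω
    rw [Measure.map_apply hY measurableSet_Iic,
      ← ENNReal.toReal_eq_toReal_iff' (measure_ne_top _ _) (measure_ne_top _ _),
      ← measureReal_def, hκω, hνω]
  filter_upwards [hrat] with ω hω
  have : IsProbabilityMeasure ((condExpKernel μ m ω).map Y) :=
    Measure.isProbabilityMeasure_map hY.aemeasurable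
  refine ext_of_generate_finite _ (BorelSpace.measurable_eq.trans
    Real.borel_eq_generateFrom_Iic_rat) Real.isPiSystem_Iic_rat ?_ (by simp)
  rintro _ hs
  simp only [mem_iUnion, mem_singleton_iff] at hs
  obtain ⟨q, rfl⟩ := hs
  exact hω q

lemma condExp_comp_ae_eq_integral (hm : m ≤ mΩ) {Y : Ω → ℝ} (hY : Measurable Y)
    {ν : Ω → ProbabilityMeasure ℝ}
    (hlaw : ∀ B : Set ℝ, MeasurableSet B →
      μ[(Y ⁻¹' B).indicator fun _ => (1 : ℝ)|m] =ᵐ[μ] fun ω => ((ν ω : Measure ℝ) B).toReal)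
    (f : BoundedContinuousFunction ℝ ℝ) :
    μ[fun ω => f (Y ω)|m] =ᵐ[μ] fun ω => ∫ x, f x ∂(ν ω : Measure ℝ) := by
  have hfY : Integrable (fun ω => f (Y ω)) μ :=
    .of_bound (f.continuous.measurable.comp hY).aestronglyMeasurable ‖f‖
      (ae_of_all _ fun ω => f.norm_coe_le_norm _)
  filter_upwards [condExp_ae_eq_integral_condExpKernel hm hfY,
    ae_map_condExpKernel_eq hm hY hlaw] with ω hω hmap
  rw [hω, ← hmap, integral_map hY.aemeasurable f.continuous.aestronglyMeasurable]

end Conditional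

lemma stronglyMeasurable_integral_iSup_comap {ι Ω : Type*} (ξ : ι → Ω → ProbabilityMeasure ℝ)
    (f : BoundedContinuousFunction ℝ ℝ) (t : ι) :
    StronglyMeasurable[⨆ s, MeasurableSpace.comap (ξ s) inferInstance]
      fun ω => ∫ x, f x ∂(ξ t ω : Measure ℝ) :=
  ((ProbabilityMeasure.continuous_integral_boundedContinuousFunction f).measurable.comp
    ((comap_measurable (ξ t)).mono (le_iSup (fun s => MeasurableSpace.comap (ξ s) _) t)
      le_rfl)).stronglyMeasurable

theorem stmt12_general
    {Ω : Type*} [mΩ : MeasurableSpace Ω] [StandardBorelSpace Ω]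
    (P : Measure Ω) [IsProbabilityMeasure P]
    (ξ : ℕ → Ω → ProbabilityMeasure ℝ)
    (X : ℝ → Ω → ℝ) (hX : ∀ τ, Measurable (X τ))
    (hle : (⨆ t : ℕ, MeasurableSpace.comap (ξ t) inferInstance) ≤ mΩ)
    -- the fundamental compatibility equation
    (hconj : ∀ (τ : ℝ), 0 ≤ τ → ∀ B : Set ℝ, MeasurableSet B →
      P[Set.indicator (X τ ⁻¹' B) (fun _ => (1:ℝ))
          | ⨆ t : ℕ, MeasurableSpace.comap (ξ t) inferInstance]
        =ᵐ[P] fun ω => (((ξ ⌊τ⌋₊ ω) : Measure ℝ) B).toReal)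
    -- cyclic independence: given Ξ, the restrictions of X to the cycles are independent
    (hcyc : iCondIndepFun (⨆ t : ℕ, MeasurableSpace.comap (ξ t) inferInstance) hle
      (fun t : ℕ => fun ω => fun s : Set.Ico (t : ℝ) ((t : ℝ) + 1) => X s ω) P)
    -- the baricenter of ξ₀
    (m : ProbabilityMeasure ℝ)
    (hbar : ∀ f : BoundedContinuousFunction ℝ ℝ,
      ∫ ω, (∫ x, f x ∂((ξ 0 ω : Measure ℝ))) ∂P = ∫ x, f x ∂(m : Measure ℝ))
    -- ergodicity: a.s. weak convergence of the Cesàro averages of (ξ_t) to 𝔼ξ₀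
    (hergodic : ∀ᵐ ω ∂P, ∀ g : BoundedContinuousFunction ℝ ℝ,
      Tendsto (fun n : ℕ => (n : ℝ)⁻¹ * ∑ t ∈ Finset.range n, ∫ x, g x ∂((ξ t ω : Measure ℝ)))
        atTop (nhds (∫ x, g x ∂(m : Measure ℝ))))
    (τ : ℕ → ℝ) (hτ : ∀ i : ℕ, τ i ∈ Set.Ico (i : ℝ) ((i : ℝ) + 1))
    (f : BoundedContinuousFunction ℝ ℝ) :
    ∀ ε > (0:ℝ),
      Tendsto (fun n : ℕ =>
          P {ω | ε < |(n : ℝ)⁻¹ * ∑ i ∈ Finset.range n, f (X (τ i) ω)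
            - ∫ ω', f (X 0 ω') ∂P|})
        atTop (nhds 0) := by
  intro ε hε
  have hfX : ∀ σ, Measurable fun ω => f (X σ ω) := fun σ => f.continuous.measurable.comp (hX σ)
  have hfX_le : ∀ σ ω, |f (X σ ω)| ≤ ‖f‖ := fun σ ω => f.norm_coe_le_norm _
  have hξf_le : ∀ t ω, |∫ x, f x ∂(ξ t ω : Measure ℝ)| ≤ ‖f‖ := fun t ω =>
    f.norm_integral_le_norm (μ := (ξ t ω : Measure ℝ))
  have hcond : ∀ (k : ℕ) (σ : ℝ), σ ∈ Ico (k : ℝ) (k + 1) →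
      P[fun ω => f (X σ ω)|⨆ t : ℕ, MeasurableSpace.comap (ξ t) inferInstance]
        =ᵐ[P] fun ω => ∫ x, f x ∂(ξ k ω : Measure ℝ) := fun k σ hσ => by
    have hσ0 : 0 ≤ σ := (Nat.cast_nonneg k).trans hσ.1
    simpa only [(Nat.floor_eq_iff hσ0).2 hσ] using
      condExp_comp_ae_eq_integral hle (hX σ) (hconj σ hσ0) f
  have hmean : ∫ ω, f (X 0 ω) ∂P = ∫ x, f x ∂(m : Measure ℝ) := by
    rw [← integral_condExp hle, integral_congr_ae (hcond 0 0 (by simp)), hbar f]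
  have horth : Pairwise fun i j => ∫ ω, (f (X (τ i) ω) - ∫ x, f x ∂(ξ i ω : Measure ℝ))
      * (f (X (τ j) ω) - ∫ x, f x ∂(ξ j ω : Measure ℝ)) ∂P = 0 := fun i j hij => by
    have hsample : ∀ k : ℕ, Measurable fun Xk : Ico (k : ℝ) (k + 1) → ℝ => f (Xk ⟨τ k, hτ k⟩) :=
      fun k => f.continuous.measurable.comp (measurable_pi_apply _)
    exact ((hcyc.condIndepFun hij).comp (hsample i) (hsample j)).integral_mul_sub_eq_zero
      hle (hfX _) (hfX _) (hfX_le _) (hfX_le _) (stronglyMeasurable_integral_iSup_comap ξ f i)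
      (stronglyMeasurable_integral_iSup_comap ξ f j) (hξf_le i) (hξf_le j)
      (hcond i _ (hτ i)) (hcond j _ (hτ j))
  rw [hmean]
  exact tendsto_measure_lt_abs_cesaroMean_sub (fun i => (hfX _).aestronglyMeasurable)
    (fun i => ((stronglyMeasurable_integral_iSup_comap ξ f i).mono hle).aestronglyMeasurable)
    (fun i => hfX_le _) hξf_le horth (hergodic.mono fun ω h => h f) hε

/-- Law of Large Numbers for cyclic-independent conjugate processes: if the latent sequence
`(ξ_t)` is ergodic in the sense that its Cesàro averages converge weakly a.s. to the
baricenter `𝔼ξ₀`, then for any sampling times `τ_i ∈ [i, i+1)` and any bounded continuous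
`f`, the averages `n⁻¹ Σ_{i<n} f(X_{τ_i})` converge in probability to `𝔼[f(X₀)]`. -/
theorem stmt12
    {Ω : Type*} [mΩ : MeasurableSpace Ω] [StandardBorelSpace Ω]
    (P : Measure Ω) [IsProbabilityMeasure P]
    (ξ : ℕ → Ω → ProbabilityMeasure ℝ) (hξ : ∀ t, Measurable (ξ t))
    (hstat : ∀ k : ℕ,
      Measure.map (fun ω => fun t : ℕ => ξ (t + k) ω) P
        = Measure.map (fun ω => fun t : ℕ => ξ t ω) P)
    (X : ℝ → Ω → ℝ) (hX : ∀ τ, Measurable (X τ))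
    (hle : (⨆ t : ℕ, MeasurableSpace.comap (ξ t) inferInstance) ≤ mΩ)
    -- the fundamental compatibility equation
    (hconj : ∀ (τ : ℝ), 0 ≤ τ → ∀ B : Set ℝ, MeasurableSet B →
      P[Set.indicator (X τ ⁻¹' B) (fun _ => (1:ℝ))
          | ⨆ t : ℕ, MeasurableSpace.comap (ξ t) inferInstance]
        =ᵐ[P] fun ω => (((ξ ⌊τ⌋₊ ω) : Measure ℝ) B).toReal)
    -- cyclic independence: given Ξ, the restrictions of X to the cycles are independent
    (hcyc : iCondIndepFun (⨆ t : ℕ, MeasurableSpace.comap (ξ t) inferInstance) hle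
      (fun t : ℕ => fun ω => fun s : Set.Ico (t : ℝ) ((t : ℝ) + 1) => X s ω) P)
    -- the baricenter of ξ₀
    (m : ProbabilityMeasure ℝ)
    (hbar : ∀ f : BoundedContinuousFunction ℝ ℝ,
      ∫ ω, (∫ x, f x ∂((ξ 0 ω : Measure ℝ))) ∂P = ∫ x, f x ∂(m : Measure ℝ))
    -- ergodicity: a.s. weak convergence of the Cesàro averages of (ξ_t) to 𝔼ξ₀
    (hergodic : ∀ᵐ ω ∂P, ∀ g : BoundedContinuousFunction ℝ ℝ,
      Tendsto (fun n : ℕ => (n : ℝ)⁻¹ * ∑ t ∈ Finset.range n, ∫ x, g x ∂((ξ t ω : Measure ℝ)))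
        atTop (nhds (∫ x, g x ∂(m : Measure ℝ))))
    (τ : ℕ → ℝ) (hτ : ∀ i : ℕ, τ i ∈ Set.Ico (i : ℝ) ((i : ℝ) + 1))
    (f : BoundedContinuousFunction ℝ ℝ) :
    ∀ ε > (0:ℝ),
      Tendsto (fun n : ℕ =>
          P {ω | ε < |(n : ℝ)⁻¹ * ∑ i ∈ Finset.range n, f (X (τ i) ω)
            - ∫ ω', f (X 0 ω') ∂P|})
        atTop (nhds 0) :=
  stmt12_general (mΩ := mΩ) P ξ X hX hle hconj hcyc m hbar hergodic τ hτ f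
end

section
/- Let H₁, …, Hₙ be independent, centered (Bochner mean zero) random elements in a separable Hilbert space 𝓗 with ‖H_t‖ ≤ c/2 almost surely for all t, for some c > 0. Then for every ε ≥ c/2, ℙ(‖Σ_{t=1}^n H_t‖ > √n ε) ≤ exp(−(ε − c/2)² / (c²/2)). -/
/-!
`x ↦ ‖∑ t, x t‖` changes by at most `c` when one coordinate `x t` is moved inside the ball of
radius `c / 2`, so by McDiarmid's inequality `‖∑ H_t‖` is sub-Gaussian around its mean with
variance proxy `n c² / 4`. McDiarmid's inequality itself follows by induction on the number of
coordinates: integrate out the first coordinate, apply Hoeffding's lemma to it, and the induction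
hypothesis to the partial average. Since the `H_t` are independent and centred they are orthogonal
in `L²`, so `E‖∑ H_t‖ ≤ (∑ E‖H_t‖²)^(1/2) ≤ √n c / 2`, and a Chernoff bound at distance
`√n (ε - c / 2)` from the mean gives the claim.
-/

open MeasureTheory ProbabilityTheory Real
open scoped NNReal InnerProductSpace

lemma exists_forall_mem_Icc_of_abs_sub_le {E : Type*} [Nonempty E] {X : E → ℝ} {c : ℝ}
    (h : ∀ u v, |X u - X v| ≤ c) : ∃ a, ∀ u, X u ∈ Set.Icc a (a + c) := by
  obtain ⟨u₀⟩ := ‹Nonempty E›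
  have hbdd : BddBelow (Set.range X) :=
    ⟨X u₀ - c, by rintro _ ⟨u, rfl⟩; linarith [(abs_sub_le_iff.1 (h u₀ u)).1]⟩
  refine ⟨⨅ u, X u, fun u => ⟨ciInf_le hbdd u, ?_⟩⟩
  have : X u - c ≤ ⨅ v, X v := le_ciInf fun v => by linarith [(abs_sub_le_iff.1 (h u v)).1]
  linarith

lemma integrable_exp_mul_of_abs_sub_le {α : Type*} [MeasurableSpace α] {μ : Measure α}
    {Z W : α → ℝ} {t c : ℝ} (hZ : AEStronglyMeasurable Z μ) (hW : AEStronglyMeasurable W μ)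
    (hexpW : Integrable (fun x => exp (t * W x)) μ) (h : ∀ x, |Z x - W x| ≤ c) :
    Integrable (fun x => exp (t * Z x)) μ := by
  have hsplit : ∀ x, exp (t * Z x) = exp (t * (Z x - W x)) * exp (t * W x) := fun x => by
    rw [← exp_add]; ring_nf
  simp_rw [hsplit]
  refine hexpW.bdd_mul (c := exp (|t| * c)) (by fun_prop) (ae_of_all _ fun x => ?_)
  rw [norm_of_nonneg (exp_pos _).le, exp_le_exp]
  calc t * (Z x - W x) ≤ |t| * |Z x - W x| := by rw [← abs_mul]; exact le_abs_self _
    _ ≤ |t| * c := by gcongr; exact h x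

section OneCoordinate

variable {E : Type*} [MeasurableSpace E] {μ : Measure E} [IsProbabilityMeasure μ]

lemma integrable_of_abs_sub_le {X : E → ℝ} (hX : AEMeasurable X μ) {c : ℝ}
    (h : ∀ u v, |X u - X v| ≤ c) : Integrable X μ := by
  have := nonempty_of_isProbabilityMeasure μ
  obtain ⟨a, ha⟩ := exists_forall_mem_Icc_of_abs_sub_le h
  exact Integrable.of_mem_Icc a (a + c) hX (ae_of_all _ ha)

lemma abs_integral_sub_integral_le {X Y : E → ℝ} (hX : Integrable X μ) (hY : Integrable Y μ)
    {c : ℝ} (h : ∀ u, |X u - Y u| ≤ c) : |∫ u, X u ∂μ - ∫ u, Y u ∂μ| ≤ c := by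
  rw [← integral_sub hX hY]
  simpa using norm_integral_le_of_norm_le_const (μ := μ) (f := fun u => X u - Y u)
    (ae_of_all _ h)

lemma hasSubgaussianMGF_sub_integral_of_abs_sub_le {X : E → ℝ} (hX : AEMeasurable X μ)
    {c : ℝ≥0} (h : ∀ u v, |X u - X v| ≤ c) :
    HasSubgaussianMGF (fun u => X u - μ[X]) ((c / 2) ^ 2) μ := by
  have := nonempty_of_isProbabilityMeasure μ
  obtain ⟨a, ha⟩ := exists_forall_mem_Icc_of_abs_sub_le h
  simpa using hasSubgaussianMGF_of_mem_Icc hX (ae_of_all _ ha)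

end OneCoordinate

section Tensorization

variable {E Y : Type*} [MeasurableSpace E] [MeasurableSpace Y]
  {μ : Measure E} [IsProbabilityMeasure μ] {ν : Measure Y} [IsProbabilityMeasure ν]

lemma hasSubgaussianMGF_sub_integral_prod {F : E × Y → ℝ} (hF : Measurable F) {c s : ℝ≥0}
    (hsection : ∀ y u v, |F (u, y) - F (v, y)| ≤ c)
    (hG : HasSubgaussianMGF (fun y => ∫ u, F (u, y) ∂μ - ∫ y', ∫ u, F (u, y') ∂μ ∂ν) s ν) :
    HasSubgaussianMGF (fun q => F q - ∫ q', F q' ∂(μ.prod ν)) ((c / 2) ^ 2 + s) (μ.prod ν) := by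
  set G : Y → ℝ := fun y => ∫ u, F (u, y) ∂μ
  set M : ℝ := ∫ y, G y ∂ν
  have hFsection : ∀ y, Measurable fun u => F (u, y) := fun y => hF.comp measurable_prodMk_right
  have hFsection_int : ∀ y, Integrable (fun u => F (u, y)) μ := fun y =>
    integrable_of_abs_sub_le (hFsection y).aemeasurable (hsection y)
  have hdev : ∀ q, |F q - G q.2| ≤ c := fun q => by
    simpa [G] using abs_integral_sub_integral_le (integrable_const (F q)) (hFsection_int q.2)
      (fun u => hsection q.2 q.1 u)
  have hGm : Measurable G := hF.stronglyMeasurable.integral_prod_left'.measurable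
  have hint : ∀ t, Integrable (fun q => exp (t * (F q - M))) (μ.prod ν) := fun t =>
    integrable_exp_mul_of_abs_sub_le (by fun_prop)
      ((hGm.comp measurable_snd).sub_const M).aestronglyMeasurable
      ((hG.integrable_exp_mul t).comp_snd μ) fun q => by simpa using hdev q
  have hFint : Integrable F (μ.prod ν) := by
    have hGint : Integrable G ν :=
      (hG.integrable.add (integrable_const M)).congr (ae_of_all _ fun y => sub_add_cancel _ _)
    have hbdd : Integrable (fun q => F q - G q.2) (μ.prod ν) :=
      Integrable.of_bound (by fun_prop) (c : ℝ) (ae_of_all _ hdev)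
    exact (hbdd.add (hGint.comp_snd μ)).congr (ae_of_all _ fun q => sub_add_cancel _ _)
  have hM : ∫ q, F q ∂(μ.prod ν) = M := integral_prod_symm F hFint
  refine ⟨fun t => by simpa only [hM] using hint t, fun t => ?_⟩
  have hsplit : ∀ y u,
      exp (t * (F (u, y) - M)) = exp (t * (F (u, y) - G y)) * exp (t * (G y - M)) :=
    fun y u => by rw [← exp_add]; ring_nf
  have hinner : ∀ y, ∫ u, exp (t * (F (u, y) - M)) ∂μ
      ≤ exp ((c / 2) ^ 2 * t ^ 2 / 2) * exp (t * (G y - M)) := fun y => by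
    calc ∫ u, exp (t * (F (u, y) - M)) ∂μ
        = mgf (fun u => F (u, y) - G y) μ t * exp (t * (G y - M)) := by
          simp_rw [hsplit y, mgf]; exact integral_mul_const _ _
      _ ≤ _ := by
          gcongr
          exact_mod_cast (hasSubgaussianMGF_sub_integral_of_abs_sub_le
            (hFsection y).aemeasurable (hsection y)).mgf_le t
  rw [hM]
  calc mgf (fun q => F q - M) (μ.prod ν) t = ∫ y, ∫ u, exp (t * (F (u, y) - M)) ∂μ ∂ν :=
        integral_prod_symm _ (hint t)
    _ ≤ ∫ y, exp ((c / 2) ^ 2 * t ^ 2 / 2) * exp (t * (G y - M)) ∂ν :=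
        integral_mono_of_nonneg (ae_of_all _ fun y => integral_nonneg fun u => (exp_pos _).le)
          ((hG.integrable_exp_mul t).const_mul _) (ae_of_all _ hinner)
    _ = exp ((c / 2) ^ 2 * t ^ 2 / 2) * mgf (fun y => G y - M) ν t := integral_const_mul _ _
    _ ≤ exp ((c / 2) ^ 2 * t ^ 2 / 2) * exp (s * t ^ 2 / 2) := by gcongr; exact hG.mgf_le t
    _ = exp (((c / 2) ^ 2 + s : ℝ≥0) * t ^ 2 / 2) := by rw [← exp_add]; push_cast; ring_nf

end Tensorization

/-- **McDiarmid's inequality**, in sub-Gaussian form. -/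
theorem hasSubgaussianMGF_sub_integral_pi {E : Type*} [MeasurableSpace E] {n : ℕ}
    (μ : Fin n → Measure E) [∀ i, IsProbabilityMeasure (μ i)] {f : (Fin n → E) → ℝ}
    (hf : Measurable f) (c : Fin n → ℝ≥0)
    (hc : ∀ x i v, |f (Function.update x i v) - f x| ≤ c i) :
    HasSubgaussianMGF (fun x => f x - ∫ y, f y ∂Measure.pi μ) (∑ i, (c i / 2) ^ 2)
      (Measure.pi μ) := by
  induction n with
  | zero =>
    have hconst : ∀ x, f x - ∫ y, f y ∂Measure.pi μ = 0 := fun x => by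
      simp [Subsingleton.elim _ x]
    simp [hconst, HasSubgaussianMGF.fun_zero]
  | succ n ih =>
    let e := MeasurableEquiv.piFinSuccAbove (fun _ : Fin (n + 1) => E) 0
    have he : MeasurePreserving e (Measure.pi μ)
        ((μ 0).prod (Measure.pi fun j => μ j.succ)) := by
      simpa only [Fin.succAbove_zero] using measurePreserving_piFinSuccAbove μ 0
    have he_symm : ∀ q, e.symm q = Fin.cons q.1 q.2 := fun q => by simp [e, Fin.consEquiv]
    let F : E × (Fin n → E) → ℝ := fun q => f (Fin.cons q.1 q.2)
    have hFe : ∀ x, F (e x) = f x := fun x => by simp [F, ← he_symm]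
    have hF : Measurable F := by
      simpa [F, Function.comp_def, he_symm] using hf.comp e.symm.measurable
    have hsection : ∀ y u v, |F (u, y) - F (v, y)| ≤ c 0 := fun y u v => by
      simpa [F] using hc (Fin.cons v y) 0 u
    have hFsection_int : ∀ y, Integrable (fun u => F (u, y)) (μ 0) := fun y =>
      integrable_of_abs_sub_le (hF.comp measurable_prodMk_right).aemeasurable (hsection y)
    have hG := ih (fun j => μ j.succ) (f := fun y => ∫ u, F (u, y) ∂μ 0)
      hF.stronglyMeasurable.integral_prod_left'.measurable (fun j => c j.succ)
      fun y j v => abs_integral_sub_integral_le (hFsection_int _) (hFsection_int y) fun u => by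
        simpa [F, Fin.cons_update] using hc (Fin.cons u y) j.succ v
    have key := hasSubgaussianMGF_sub_integral_prod hF hsection hG
    have hint : ∫ q, F q ∂((μ 0).prod (Measure.pi fun j => μ j.succ))
        = ∫ x, f x ∂Measure.pi μ := by
      rw [← he.integral_comp']
      simp_rw [hFe]
    rw [hint, ← he.map_eq] at key
    simpa [Function.comp_def, hFe, Fin.sum_univ_succ] using key.of_map e.measurable.aemeasurable

lemma abs_norm_sum_update_sub_norm_sum_le {ι E V : Type*} [Fintype ι] [DecidableEq ι]
    [SeminormedAddCommGroup V] {g : E → V} {r : ℝ} (hg : ∀ v, ‖g v‖ ≤ r)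
    (x : ι → E) (i : ι) (v : E) :
    |‖∑ j, g (Function.update x i v j)‖ - ‖∑ j, g (x j)‖| ≤ 2 * r := by
  have hdiff : ∑ j, g (Function.update x i v j) - ∑ j, g (x j) = g v - g (x i) := by
    rw [← Finset.sum_sub_distrib, Finset.sum_eq_single i (fun j _ hj => by simp [hj]) (by simp)]
    simp
  calc _ ≤ ‖∑ j, g (Function.update x i v j) - ∑ j, g (x j)‖ := abs_norm_sub_norm_le _ _
    _ ≤ ‖g v‖ + ‖g (x i)‖ := hdiff ▸ norm_sub_le _ _
    _ ≤ 2 * r := by linarith [hg v, hg (x i)]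

lemma hasSubgaussianMGF_norm_sum_sub_integral {Ω E : Type*} [MeasurableSpace Ω]
    {P : Measure Ω} [IsProbabilityMeasure P] [NormedAddCommGroup E] [MeasurableSpace E]
    [BorelSpace E] [SecondCountableTopology E] {n : ℕ} {H : Fin n → Ω → E}
    (hmeas : ∀ t, Measurable (H t)) (hindep : iIndepFun H P) {r : ℝ≥0}
    (hbdd : ∀ t, ∀ᵐ ω ∂P, ‖H t ω‖ ≤ r) :
    HasSubgaussianMGF (fun ω => ‖∑ t, H t ω‖ - ∫ ω', ‖∑ t, H t ω'‖ ∂P) (n * r ^ 2) P := by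
  -- truncating to the ball makes the differences of `f` bounded everywhere, not only a.e.
  let K : E → E := (Metric.closedBall 0 r).indicator id
  have hK : ∀ v, ‖K v‖ ≤ r := fun v => by
    by_cases hv : v ∈ Metric.closedBall 0 r
    · simpa [K, Set.indicator_of_mem hv] using hv
    · simp [K, Set.indicator_of_notMem hv]
  let f : (Fin n → E) → ℝ := fun x => ‖∑ i, K (x i)‖
  have hf : Measurable f := by
    have : Measurable K := measurable_id.indicator Metric.isClosed_closedBall.measurableSet
    fun_prop
  have hfH : (fun ω => ‖∑ t, H t ω‖) =ᵐ[P] fun ω => f (fun i => H i ω) := by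
    filter_upwards [ae_all_iff.2 hbdd] with ω hω
    simp [f, K, hω]
  let μ : Fin n → Measure E := fun i => P.map (H i)
  have : ∀ i, IsProbabilityMeasure (μ i) := fun i =>
    Measure.isProbabilityMeasure_map (hmeas i).aemeasurable
  have hmap : P.map (fun ω i => H i ω) = Measure.pi μ :=
    hindep.map_fun_eq_pi_map fun i => (hmeas i).aemeasurable
  have hsubG := hasSubgaussianMGF_sub_integral_pi μ hf (fun _ => 2 * r)
    fun x i v => by exact_mod_cast abs_norm_sum_update_sub_norm_sum_le hK x i v
  rw [← hmap, integral_map (by fun_prop) hf.aestronglyMeasurable, ← integral_congr_ae hfH]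
    at hsubG
  have hparam : ∑ _i : Fin n, (2 * r / 2) ^ 2 = n * r ^ 2 := by
    simp [mul_div_cancel_left₀ r two_ne_zero]
  rw [hparam] at hsubG
  exact (hsubG.of_map (by fun_prop)).congr (hfH.mono fun ω hω => by simp [hω])

lemma sq_integral_le_integral_sq {Ω : Type*} [MeasurableSpace Ω] {P : Measure Ω}
    [IsProbabilityMeasure P] {X : Ω → ℝ} (hX : MemLp X 2 P) :
    (∫ ω, X ω ∂P) ^ 2 ≤ ∫ ω, X ω ^ 2 ∂P := by
  have := variance_nonneg X P
  rw [variance_eq_sub hX] at this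
  simpa using this

section HilbertSpace

variable {Ω 𝓗 : Type*} [MeasurableSpace Ω] {P : Measure Ω} [IsProbabilityMeasure P]
  [NormedAddCommGroup 𝓗] [InnerProductSpace ℝ 𝓗] [CompleteSpace 𝓗]
  [MeasurableSpace 𝓗] [BorelSpace 𝓗] {ι : Type*} [Fintype ι] {H : ι → Ω → 𝓗}

lemma integral_norm_sum_sq_eq_sum (hindep : iIndepFun H P) (hL2 : ∀ t, MemLp (H t) 2 P)
    (hcent : ∀ t, P[H t] = 0) :
    ∫ ω, ‖∑ t, H t ω‖ ^ 2 ∂P = ∑ t, ∫ ω, ‖H t ω‖ ^ 2 ∂P := by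
  classical
  have hint : ∀ t, Integrable (H t) P := fun t => (hL2 t).integrable one_le_two
  have hinner : ∀ s t, Integrable (fun ω => ⟪H s ω, H t ω⟫_ℝ) P := by
    intro s t
    rcases eq_or_ne s t with rfl | hst
    · simpa [real_inner_self_eq_norm_sq] using
        (memLp_two_iff_integrable_sq_norm (hL2 s).1).1 (hL2 s)
    · exact (hindep.indepFun hst).integrable_bilin (hint s) (hint t) (innerSL ℝ)
  have hcross : ∀ s t, s ≠ t → ∫ ω, ⟪H s ω, H t ω⟫_ℝ ∂P = 0 := fun s t hst => by
    have h : ∫ ω, ⟪H s ω, H t ω⟫_ℝ ∂P = ⟪P[H s], P[H t]⟫_ℝ :=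
      (hindep.indepFun hst).integral_bilin (hint s) (hint t) (innerSL ℝ)
    rw [h, hcent, inner_zero_left]
  calc ∫ ω, ‖∑ t, H t ω‖ ^ 2 ∂P = ∑ s, ∑ t, ∫ ω, ⟪H s ω, H t ω⟫_ℝ ∂P := by
        simp_rw [← real_inner_self_eq_norm_sq, sum_inner, inner_sum]
        rw [integral_finsetSum _ fun s _ => integrable_finsetSum _ fun t _ => hinner s t]
        exact Finset.sum_congr rfl fun s _ => integral_finsetSum _ fun t _ => hinner s t
    _ = ∑ t, ∫ ω, ‖H t ω‖ ^ 2 ∂P := by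
        refine Finset.sum_congr rfl fun s _ => ?_
        rw [Finset.sum_eq_single s (fun t _ hts => hcross s t hts.symm) (by simp)]
        simp_rw [real_inner_self_eq_norm_sq]

lemma integral_norm_sum_le_sqrt_card_mul (hmeas : ∀ t, AEStronglyMeasurable (H t) P)
    (hindep : iIndepFun H P) {r : ℝ≥0} (hbdd : ∀ t, ∀ᵐ ω ∂P, ‖H t ω‖ ≤ r)
    (hcent : ∀ t, P[H t] = 0) :
    ∫ ω, ‖∑ t, H t ω‖ ∂P ≤ √(Fintype.card ι) * r := by
  have hL2 : ∀ t, MemLp (H t) 2 P := fun t => MemLp.of_bound (hmeas t) r (hbdd t)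
  have hmoment : ∀ t, ∫ ω, ‖H t ω‖ ^ 2 ∂P ≤ r ^ 2 := fun t => by
    refine (integral_mono_ae ((memLp_two_iff_integrable_sq_norm (hmeas t)).1 (hL2 t))
      (integrable_const (r ^ 2 : ℝ)) ?_).trans (by simp)
    filter_upwards [hbdd t] with ω hω
    exact pow_le_pow_left₀ (norm_nonneg _) hω 2
  have hsq : (∫ ω, ‖∑ t, H t ω‖ ∂P) ^ 2 ≤ Fintype.card ι * r ^ 2 :=
    calc (∫ ω, ‖∑ t, H t ω‖ ∂P) ^ 2 ≤ ∫ ω, ‖∑ t, H t ω‖ ^ 2 ∂P :=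
          sq_integral_le_integral_sq (memLp_finsetSum _ fun t _ => hL2 t).norm
      _ = ∑ t, ∫ ω, ‖H t ω‖ ^ 2 ∂P := integral_norm_sum_sq_eq_sum hindep hL2 hcent
      _ ≤ ∑ _t : ι, (r : ℝ) ^ 2 := Finset.sum_le_sum fun t _ => hmoment t
      _ = Fintype.card ι * r ^ 2 := by simp
  calc _ ≤ √(Fintype.card ι * r ^ 2) := Real.le_sqrt_of_sq_le hsq
    _ = √(Fintype.card ι) * r := by rw [Real.sqrt_mul (by positivity), Real.sqrt_sq r.coe_nonneg]

end HilbertSpace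

/-- Hilbert-space Hoeffding inequality: if `H₁,…,Hₙ` are independent, centered random
elements of a separable Hilbert space with `‖H_t‖ ≤ c/2` a.s., then for every `ε ≥ c/2`,
`ℙ(‖Σ H_t‖ > √n ε) ≤ exp(−(ε − c/2)²/(c²/2))`. -/
theorem stmt16
    {Ω : Type*} [MeasurableSpace Ω] (P : Measure Ω) [IsProbabilityMeasure P]
    {𝓗 : Type*} [NormedAddCommGroup 𝓗] [InnerProductSpace ℝ 𝓗] [CompleteSpace 𝓗]
    [SecondCountableTopology 𝓗] [MeasurableSpace 𝓗] [BorelSpace 𝓗]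
    (n : ℕ) (H : Fin n → Ω → 𝓗)
    (hmeas : ∀ t, Measurable (H t))
    (hindep : iIndepFun H P)
    (c : ℝ) (hc : 0 < c)
    (hbdd : ∀ t, ∀ᵐ ω ∂P, ‖H t ω‖ ≤ c / 2)
    (hcentered : ∀ t, ∫ ω, H t ω ∂P = 0) :
    ∀ ε : ℝ, c / 2 ≤ ε →
      (P {ω | Real.sqrt n * ε < ‖∑ t, H t ω‖}).toReal
        ≤ Real.exp (-(ε - c / 2) ^ 2 / (c ^ 2 / 2)) := by
  intro ε hε
  rcases n.eq_zero_or_pos with rfl | hn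
  · simp [(exp_pos _).le]
  let r : ℝ≥0 := ⟨c / 2, by positivity⟩
  have hmean : ∫ ω, ‖∑ t, H t ω‖ ∂P ≤ √n * r := by
    simpa using integral_norm_sum_le_sqrt_card_mul (fun t => (hmeas t).aestronglyMeasurable)
      hindep (r := r) hbdd hcentered
  have hsubG := hasSubgaussianMGF_norm_sum_sub_integral hmeas hindep (r := r) hbdd
  calc P.real {ω | √n * ε < ‖∑ t, H t ω‖}
      ≤ P.real {ω | √n * (ε - r) ≤ ‖∑ t, H t ω‖ - ∫ ω', ‖∑ t, H t ω'‖ ∂P} :=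
        measureReal_mono fun ω hω => by
          simp only [Set.mem_ofPred] at hω ⊢
          nlinarith
    _ ≤ exp (-(√n * (ε - r)) ^ 2 / (2 * (n * r ^ 2))) :=
        hsubG.measure_ge_le (mul_nonneg (sqrt_nonneg _) (sub_nonneg.2 hε))
    _ = exp (-(ε - c / 2) ^ 2 / (c ^ 2 / 2)) := by
        have hn' : (n : ℝ) ≠ 0 := by positivity
        rw [mul_pow, sq_sqrt n.cast_nonneg, show (r : ℝ) = c / 2 from rfl]
        field_simp
end
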